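/- arXiv:2111.08294 — 11 statements merged into one kernel-verified Lean document; each statement's English description precedes it below -/
import Mathlib

section
/- Assume that 𝒜 is convex and closed, 𝒫 is convex and closed, V₀ is convex and lower semicontinuous, V₁ is superlinear (positively homogeneous: V₁(λx) = λV₁(x) for all λ ≥ 0 and all x, and superadditive: V₁(x+y) ≥ V₁(x) + V₁(y) for all x, y) and upper semicontinuous, and that ℒ is a linear subspace of ℝ^N. Then the set 𝒞 is closed in 𝒳 × ℝ, the risk measure ρ is lower semicontinuous, and for every X ∈ 𝒳 with ρ(X) ∈ ℝ the infimum defining ρ(X) is attained: there exists x ∈ 𝒫 with X + V₁(x) ∈ 𝒜 and V₀(x) = ρ(X). -/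
/-!
The set `𝒞` is the projection to `𝒳 × ℝ` of the closed set of triples `((X, m), x)` in which the
portfolio `x` witnesses `(X, m) ∈ 𝒞`. Translating a witness along `ℒ` keeps it a witness, so
witnesses may be taken in a complement `S'` of the subspace `ℒ`. A closed set in `Y × ℝ^N` has
closed projection to `Y` once its asymptotic cone contains no nonzero direction `(0, d)`; for
witnesses in `S'` such a `d` would lie in `ℒ ∩ S' = 0`. Lower semicontinuity of `ρ` and
attainment of the infimum are then read off the closedness of `𝒞`, because `ρ(X) < r` exactly
when `(X, r') ∈ 𝒞` for some `r' < r`.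
-/

open Topology Filter Set Pointwise

noncomputable section

/-- The asymptotic cone `C^∞` of a set `C` in a real topological vector space: the set of all
limits `z` of nets `l_α • c_α` with `c_α ∈ C`, `l_α ≥ 0`, `l_α → 0`, expressed via the standard
neighborhood characterization of net convergence. -/
def asymCone {E : Type*} [AddCommMonoid E] [SMul ℝ E] [TopologicalSpace E] (C : Set E) :
    Set E :=
  {z | ∀ U ∈ 𝓝 z, ∀ ε : ℝ, 0 < ε → ∃ c ∈ C, ∃ l : ℝ, 0 ≤ l ∧ l < ε ∧ l • c ∈ U}

/-- Epigraph of a real-valued function. -/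
def epigraph {E : Type*} (f : E → ℝ) : Set (E × ℝ) := {p | f p.1 ≤ p.2}

/-- The risk measure `ρ` associated to `(A, P, V₀, V₁)`, valued in the extended reals
(`sInf ∅ = ⊤`). -/
def riskM {X : Type*} [AddCommMonoid X] {N : ℕ} (A : Set X) (P : Set (Fin N → ℝ))
    (V₀ : (Fin N → ℝ) → ℝ) (V₁ : (Fin N → ℝ) → X) (Z : X) : EReal :=
  sInf ((fun x => ((V₀ x : ℝ) : EReal)) '' {x | x ∈ P ∧ Z + V₁ x ∈ A})

/-- The set `ℒ = {x ∈ 𝒫^∞ : V₀^∞(x) ≤ 0, V₁(x) ∈ 𝒜^∞}`.  Here `V₀^∞(x) ≤ 0` is expressed as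
`(x, 0)` belonging to the asymptotic cone of the epigraph of `V₀`, which is by definition the
epigraph of `V₀^∞`. -/
def Lset {X : Type*} [AddCommMonoid X] [SMul ℝ X] [TopologicalSpace X] {N : ℕ}
    (A : Set X) (P : Set (Fin N → ℝ)) (V₀ : (Fin N → ℝ) → ℝ) (V₁ : (Fin N → ℝ) → X) :
    Set (Fin N → ℝ) :=
  {x | x ∈ asymCone P ∧ (x, (0 : ℝ)) ∈ asymCone (epigraph V₀) ∧ V₁ x ∈ asymCone A}

/-- Upper semicontinuity of the liquidation rule `V₁` relative to the ordering cone `Xp`: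
for every `x` and every neighborhood `U` of `V₁ x` there is a neighborhood `W` of `x` with
`V₁(W) ⊆ U - Xp`. -/
def USCV1 {X : Type*} [AddCommGroup X] [TopologicalSpace X] {N : ℕ}
    (Xp : Set X) (V₁ : (Fin N → ℝ) → X) : Prop :=
  ∀ x : Fin N → ℝ, ∀ U ∈ 𝓝 (V₁ x), ∃ W ∈ 𝓝 x, ∀ y ∈ W, ∃ u ∈ U, ∃ p ∈ Xp, V₁ y = u - p

section AsymptoticCone

variable {E F : Type*} [AddCommGroup E] [Module ℝ E] [TopologicalSpace E]
  [AddCommGroup F] [Module ℝ F] [TopologicalSpace F] {C D : Set E} {z : E}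

theorem mem_asymCone_of_tendsto {ι : Type*} {G : Filter ι} [G.NeBot] {c : ι → E} {l : ι → ℝ}
    (hc : ∀ᶠ i in G, c i ∈ C) (hl : ∀ᶠ i in G, 0 ≤ l i) (hl0 : Tendsto l G (𝓝 0))
    (hz : Tendsto (fun i => l i • c i) G (𝓝 z)) : z ∈ asymCone C := by
  intro U hU ε hε
  obtain ⟨i, hci, hli, hlε, hliU⟩ :=
    (hc.and (hl.and ((hl0.eventually (eventually_lt_nhds hε)).and (hz hU)))).exists
  exact ⟨c i, hci, l i, hli, hlε, hliU⟩

theorem asymCone_mono (h : C ⊆ D) : asymCone C ⊆ asymCone D := by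
  intro _ hz U hU ε hε
  obtain ⟨c, hc, l, hl, hlε, hlcU⟩ := hz U hU ε hε
  exact ⟨c, h hc, l, hl, hlε, hlcU⟩

theorem mem_asymCone_of_mapsTo {f : E → F} (hf : Continuous f)
    (hsmul : ∀ (l : ℝ) c, f (l • c) = l • f c) {B : Set F} (hCB : MapsTo f C B)
    (hz : z ∈ asymCone C) : f z ∈ asymCone B := by
  intro U hU ε hε
  obtain ⟨c, hc, l, hl, hlε, hlcU⟩ := hz _ (hf.continuousAt hU) ε hε
  exact ⟨f c, hCB hc, l, hl, hlε, hsmul l c ▸ hlcU⟩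

theorem add_mem_of_mem_asymCone [ContinuousAdd E] [ContinuousSMul ℝ E] (hC : Convex ℝ C)
    (hCc : IsClosed C) {a : E} (ha : a ∈ C) (hz : z ∈ asymCone C) : a + z ∈ C := by
  refine hCc.closure_subset_iff.2 subset_rfl (mem_closure_iff_nhds.2 fun V hV => ?_)
  have hcont : Continuous fun q : E × ℝ => (1 - q.2) • a + q.1 := by fun_prop
  have hV' : (fun q : E × ℝ => (1 - q.2) • a + q.1) ⁻¹' V ∈ 𝓝 (z, 0) :=
    hcont.continuousAt (by simpa using hV)
  obtain ⟨U, hU, T, hT, hUT⟩ := mem_nhds_prod_iff.1 hV'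
  obtain ⟨ε, hε, hεT⟩ := Metric.mem_nhds_iff.1 hT
  obtain ⟨c, hc, l, hl, hlε, hlc⟩ := hz U hU (min ε 1) (lt_min hε one_pos)
  have hlT : l ∈ T := hεT (by simpa [abs_of_nonneg hl] using hlε.trans_le (min_le_left _ _))
  exact ⟨_, hUT (mk_mem_prod hlc hlT),
    hC ha hc (by linarith [min_le_right ε 1]) hl (sub_add_cancel 1 l)⟩

end AsymptoticCone

/-- Along an ultrafilter the `E`-components either stay bounded, and then converge by
compactness, or escape to infinity, and then their normalisations converge to a unit vertical
direction of the asymptotic cone. -/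
theorem isClosed_image_fst_of_asymCone {Y E : Type*} [AddCommGroup Y] [Module ℝ Y]
    [TopologicalSpace Y] [ContinuousSMul ℝ Y]
    [NormedAddCommGroup E] [NormedSpace ℝ E] [FiniteDimensional ℝ E] {W : Set (Y × E)}
    (hW : IsClosed W) (hWd : ∀ d : E, ((0 : Y), d) ∈ asymCone W → d = 0) :
    IsClosed (Prod.fst '' W) := by
  refine isClosed_of_closure_subset fun y hy => ?_
  obtain ⟨u, hu, huy⟩ := mem_closure_iff_ultrafilter.1 hy
  set G := Ultrafilter.ofComapInfPrincipal hu
  have hWG : W ∈ G := Ultrafilter.ofComapInfPrincipal_mem hu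
  have hGy : Tendsto Prod.fst (G : Filter (Y × E)) (𝓝 y) := by
    rw [Tendsto, ← Ultrafilter.coe_map, Ultrafilter.ofComapInfPrincipal_eq_of_map]
    exact huy
  by_cases hbdd : ∃ R, Metric.closedBall (0 : E) R ∈ G.map Prod.snd
  · obtain ⟨R, hR⟩ := hbdd
    obtain ⟨x, -, hx⟩ := (isCompact_closedBall (0 : E) R).ultrafilter_le_nhds _
      (le_principal_iff.2 hR)
    exact ⟨(y, x), hW.mem_of_tendsto (hGy.prodMk_nhds hx) hWG, rfl⟩
  push Not at hbdd
  have hnorm : Tendsto (fun p : Y × E => ‖p.2‖) (G : Filter (Y × E)) atTop := by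
    refine tendsto_atTop.2 fun R => ?_
    filter_upwards [Ultrafilter.compl_mem_iff_notMem.2 (hbdd R)] with p hp
    simp only [mem_compl_iff, mem_preimage, Metric.mem_closedBall, dist_zero_right,
      not_le] at hp
    exact hp.le
  obtain ⟨d, hd, hGd⟩ := (isCompact_sphere (0 : E) 1).ultrafilter_le_nhds
    (G.map fun p => ‖p.2‖⁻¹ • p.2) <| le_principal_iff.2 <| Ultrafilter.mem_map.2 <| by
      filter_upwards [hnorm.eventually_gt_atTop 0] with p hp
      simp [norm_smul, hp.ne']
  have hinv : Tendsto (fun p : Y × E => ‖p.2‖⁻¹) (G : Filter (Y × E)) (𝓝 0) :=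
    tendsto_inv_atTop_zero.comp hnorm
  have hvert : ((0 : Y), d) ∈ asymCone W := by
    refine mem_asymCone_of_tendsto hWG (.of_forall fun _ => inv_nonneg.2 (norm_nonneg _)) hinv ?_
    have h := (hinv.smul hGy).prodMk_nhds hGd
    rwa [zero_smul] at h
  exact absurd hd (by simp [hWd d hvert])

section WitnessSet

variable {X : Type*} [AddCommGroup X] [TopologicalSpace X] [ContinuousAdd X] {N : ℕ}
  {Xp A : Set X} {P : Set (Fin N → ℝ)} {V₀ : (Fin N → ℝ) → ℝ} {V₁ : (Fin N → ℝ) → X}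

variable (A P V₀ V₁) in
def witnessSet : Set ((X × ℝ) × (Fin N → ℝ)) :=
  {q | q.2 ∈ P ∧ V₀ q.2 ≤ q.1.2 ∧ q.1.1 + V₁ q.2 ∈ A}

theorem isClosed_setOf_add_apply_mem (hAcl : IsClosed A)
    (hAmono : ∀ a ∈ A, ∀ p ∈ Xp, a + p ∈ A) (hV₁usc : USCV1 Xp V₁) :
    IsClosed {p : X × (Fin N → ℝ) | p.1 + V₁ p.2 ∈ A} := by
  refine isClosed_of_closure_subset fun ⟨z, x⟩ hzx =>
    hAcl.closure_subset (mem_closure_iff_nhds.2 fun V hV => ?_)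
  obtain ⟨Vz, hVz, Vx, hVx, hV⟩ := mem_nhds_prod_iff.1 (continuous_add.continuousAt hV)
  obtain ⟨T, hT, hTV⟩ := hV₁usc x Vx hVx
  obtain ⟨⟨z', x'⟩, ⟨hz', hx'⟩, hA⟩ := mem_closure_iff_nhds.1 hzx _ (prod_mem_nhds hVz hT)
  obtain ⟨u, hu, p, hp, hx'u⟩ := hTV x' hx'
  refine ⟨z' + u, hV (mk_mem_prod hz' hu), ?_⟩
  simpa [hx'u, add_assoc] using hAmono _ hA p hp

theorem isClosed_witnessSet (hPcl : IsClosed P) (hV₀lsc : LowerSemicontinuous V₀)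
    (hAcl : IsClosed A) (hAmono : ∀ a ∈ A, ∀ p ∈ Xp, a + p ∈ A) (hV₁usc : USCV1 Xp V₁) :
    IsClosed (witnessSet A P V₀ V₁) :=
  (hPcl.preimage continuous_snd).inter <|
    (IsClosed.preimage (f := fun q : (X × ℝ) × (Fin N → ℝ) => (q.2, q.1.2)) (by fun_prop)
      hV₀lsc.isClosed_epigraph).inter <|
    IsClosed.preimage (f := fun q : (X × ℝ) × (Fin N → ℝ) => (q.1.1, q.2)) (by fun_prop)
      (isClosed_setOf_add_apply_mem hAcl hAmono hV₁usc)

variable [Module ℝ X]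

theorem apply_mem_asymCone_of_mem_asymCone (hXp : ∀ c : ℝ, 0 ≤ c → ∀ z ∈ Xp, c • z ∈ Xp)
    (hAmono : ∀ a ∈ A, ∀ p ∈ Xp, a + p ∈ A) (hV₁hom : ∀ c : ℝ, 0 ≤ c → ∀ x, V₁ (c • x) = c • V₁ x)
    (hV₁usc : USCV1 Xp V₁) {d : Fin N → ℝ} (hd0 : d ≠ 0)
    (hd : ((0 : X), d) ∈ asymCone {p : X × (Fin N → ℝ) | p.1 + V₁ p.2 ∈ A}) :
    V₁ d ∈ asymCone A := by
  intro U hU ε hε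
  obtain ⟨T, hT, U', hU', hTU⟩ :=
    mem_nhds_prod_iff.1 (continuous_add.continuousAt (by simpa using hU) :
      (fun p : X × X => p.1 + p.2) ⁻¹' U ∈ 𝓝 (0, V₁ d))
  obtain ⟨W, hW, hWU'⟩ := hV₁usc d U' hU'
  -- shrinking to `{x ≠ 0}` rules out the scale `l = 0`
  obtain ⟨⟨z, x⟩, hzx, l, hl, hlε, hlzx⟩ :=
    hd _ (prod_mem_nhds hT (inter_mem hW (isOpen_ne.mem_nhds hd0))) ε hε
  obtain ⟨hlz, hlxW, hlx0 : l • x ≠ 0⟩ := hlzx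
  have hl0 : 0 < l := hl.lt_of_ne (by rintro rfl; exact hlx0 (zero_smul ℝ x))
  obtain ⟨u, hu, p, hp, hlxu⟩ := hWU' (l • x) hlxW
  refine ⟨z + V₁ x + l⁻¹ • p, hAmono _ hzx _ (hXp _ (inv_nonneg.2 hl) p hp), l, hl, hlε, ?_⟩
  have : l • (z + V₁ x + l⁻¹ • p) = l • z + u := by
    rw [smul_add, smul_add, smul_inv_smul₀ hl0.ne', ← hV₁hom l hl, hlxu]
    abel
  exact this ▸ hTU (mk_mem_prod hlz hu)

theorem mem_Lset_of_mem_asymCone_witnessSet (hXp : ∀ c : ℝ, 0 ≤ c → ∀ z ∈ Xp, c • z ∈ Xp)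
    (hAmono : ∀ a ∈ A, ∀ p ∈ Xp, a + p ∈ A) (hV₁hom : ∀ c : ℝ, 0 ≤ c → ∀ x, V₁ (c • x) = c • V₁ x)
    (hV₁usc : USCV1 Xp V₁) {d : Fin N → ℝ} (hd0 : d ≠ 0)
    (hd : ((0 : X × ℝ), d) ∈ asymCone (witnessSet A P V₀ V₁)) : d ∈ Lset A P V₀ V₁ :=
  ⟨mem_asymCone_of_mapsTo continuous_snd (fun _ _ => rfl) (fun _ hq => hq.1) hd,
    mem_asymCone_of_mapsTo (f := fun q : (X × ℝ) × (Fin N → ℝ) => (q.2, q.1.2)) (by fun_prop)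
      (fun _ _ => rfl) (fun _ hq => hq.2.1) hd,
    apply_mem_asymCone_of_mem_asymCone hXp hAmono hV₁hom hV₁usc hd0 <|
      mem_asymCone_of_mapsTo (f := fun q : (X × ℝ) × (Fin N → ℝ) => (q.1.1, q.2)) (by fun_prop)
        (fun _ _ => rfl) (fun _ hq => hq.2.2) hd⟩

variable [ContinuousSMul ℝ X]

theorem mk_add_mem_witnessSet (hPconv : Convex ℝ P) (hPcl : IsClosed P)
    (hV₀conv : ConvexOn ℝ univ V₀) (hV₀lsc : LowerSemicontinuous V₀) (hAconv : Convex ℝ A)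
    (hAcl : IsClosed A) (hAmono : ∀ a ∈ A, ∀ p ∈ Xp, a + p ∈ A)
    (hV₁super : ∀ x y, V₁ (x + y) - (V₁ x + V₁ y) ∈ Xp) {q : (X × ℝ) × (Fin N → ℝ)}
    (hq : q ∈ witnessSet A P V₀ V₁) {d : Fin N → ℝ} (hd : d ∈ Lset A P V₀ V₁) :
    (q.1, q.2 + d) ∈ witnessSet A P V₀ V₁ := by
  obtain ⟨⟨Z, m⟩, x⟩ := q
  obtain ⟨hxP, hxm, hxA⟩ := hq
  obtain ⟨hdP, hdV₀, hdA⟩ := hd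
  have hV₀ : (x, V₀ x) + (d, 0) ∈ epigraph V₀ :=
    add_mem_of_mem_asymCone (by simpa [epigraph] using hV₀conv.convex_epigraph)
      hV₀lsc.isClosed_epigraph (le_refl (V₀ x)) hdV₀
  have hA : Z + V₁ x + V₁ d + (V₁ (x + d) - (V₁ x + V₁ d)) ∈ A :=
    hAmono _ (add_mem_of_mem_asymCone hAconv hAcl hxA hdA) _ (hV₁super x d)
  refine ⟨add_mem_of_mem_asymCone hPconv hPcl hxP hdP, ?_, ?_⟩
  · exact le_trans (by simpa [epigraph] using hV₀) hxm
  · convert hA using 1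
    abel

theorem isClosed_setOf_exists_witness (hXp : ∀ c : ℝ, 0 ≤ c → ∀ z ∈ Xp, c • z ∈ Xp)
    (hPconv : Convex ℝ P) (hPcl : IsClosed P) (hV₀conv : ConvexOn ℝ univ V₀)
    (hV₀lsc : LowerSemicontinuous V₀) (hAconv : Convex ℝ A) (hAcl : IsClosed A)
    (hAmono : ∀ a ∈ A, ∀ p ∈ Xp, a + p ∈ A) (hV₁hom : ∀ c : ℝ, 0 ≤ c → ∀ x, V₁ (c • x) = c • V₁ x)
    (hV₁super : ∀ x y, V₁ (x + y) - (V₁ x + V₁ y) ∈ Xp) (hV₁usc : USCV1 Xp V₁)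
    (hLlin : ∃ S : Submodule ℝ (Fin N → ℝ), (S : Set (Fin N → ℝ)) = Lset A P V₀ V₁) :
    IsClosed {p : X × ℝ | ∃ x ∈ P, V₀ x ≤ p.2 ∧ p.1 + V₁ x ∈ A} := by
  obtain ⟨S, hS⟩ := hLlin
  obtain ⟨S', hSS'⟩ := Submodule.exists_isCompl S
  have hS'cl : IsClosed (S' : Set (Fin N → ℝ)) := S'.closed_of_finiteDimensional
  -- translating along `ℒ = S` moves every witness into the complement `S'`
  have hC : {p : X × ℝ | ∃ x ∈ P, V₀ x ≤ p.2 ∧ p.1 + V₁ x ∈ A} =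
      Prod.fst '' (witnessSet A P V₀ V₁ ∩ {q | q.2 ∈ S'}) := by
    ext p
    constructor
    · rintro ⟨x, hx⟩
      obtain ⟨s, hs, t, ht, rfl⟩ :=
        Submodule.mem_sup.1 (hSS'.sup_eq_top ▸ Submodule.mem_top : x ∈ S ⊔ S')
      have hst := mk_add_mem_witnessSet hPconv hPcl hV₀conv hV₀lsc hAconv hAcl hAmono hV₁super
        (q := (p, s + t)) hx (by rw [← hS]; exact S.neg_mem hs)
      exact ⟨(p, t), ⟨by simpa using hst, ht⟩, rfl⟩
    · rintro ⟨⟨p, x⟩, ⟨hx, -⟩, rfl⟩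
      exact ⟨x, hx⟩
  rw [hC]
  refine isClosed_image_fst_of_asymCone ((isClosed_witnessSet hPcl hV₀lsc hAcl hAmono
    hV₁usc).inter (hS'cl.preimage continuous_snd)) fun d hd => ?_
  by_contra hd0
  have hdS' : d ∈ S' := by
    simpa using add_mem_of_mem_asymCone S'.convex hS'cl S'.zero_mem <|
      mem_asymCone_of_mapsTo continuous_snd (fun _ _ => rfl) (fun _ hq => hq.2) hd
  have hdS : d ∈ (S : Set (Fin N → ℝ)) := hS ▸ mem_Lset_of_mem_asymCone_witnessSet hXp hAmono
    hV₁hom hV₁usc hd0 (asymCone_mono inter_subset_left hd)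
  exact hd0 (Submodule.disjoint_def.1 hSS'.disjoint d hdS hdS')

end WitnessSet

section RiskMeasure

variable {X : Type*} [AddCommMonoid X] {N : ℕ} {A : Set X} {P : Set (Fin N → ℝ)}
  {V₀ : (Fin N → ℝ) → ℝ} {V₁ : (Fin N → ℝ) → X} {Z : X}

theorem riskM_le {x : Fin N → ℝ} (hx : x ∈ P) (hZx : Z + V₁ x ∈ A) :
    riskM A P V₀ V₁ Z ≤ V₀ x :=
  sInf_le ⟨x, ⟨hx, hZx⟩, rfl⟩

theorem riskM_lt_coe_iff {r : ℝ} :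
    riskM A P V₀ V₁ Z < r ↔ ∃ x ∈ P, V₀ x < r ∧ Z + V₁ x ∈ A := by
  rw [riskM, sInf_lt_iff]
  constructor
  · rintro ⟨_, ⟨x, ⟨hx, hZx⟩, rfl⟩, hxr⟩
    exact ⟨x, hx, EReal.coe_lt_coe_iff.1 hxr, hZx⟩
  · rintro ⟨x, hx, hxr, hZx⟩
    exact ⟨_, ⟨x, ⟨hx, hZx⟩, rfl⟩, EReal.coe_lt_coe_iff.2 hxr⟩

variable [TopologicalSpace X]

theorem lowerSemicontinuous_riskM
    (hC : IsClosed {p : X × ℝ | ∃ x ∈ P, V₀ x ≤ p.2 ∧ p.1 + V₁ x ∈ A}) :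
    LowerSemicontinuous (riskM A P V₀ V₁) := by
  intro Z y hy
  obtain ⟨r, hyr, hrZ⟩ := EReal.exists_between_coe_real hy
  have hZr : (Z, r) ∉ {p : X × ℝ | ∃ x ∈ P, V₀ x ≤ p.2 ∧ p.1 + V₁ x ∈ A} := by
    rintro ⟨x, hx, hxr, hZx⟩
    exact ((riskM_le hx hZx).trans (EReal.coe_le_coe_iff.2 hxr)).not_gt hrZ
  filter_upwards [(hC.isOpen_compl.preimage (Continuous.prodMk_left r)).mem_nhds hZr]
    with Z' hZ'
  refine hyr.trans_le (not_lt.1 fun h => hZ' ?_)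
  obtain ⟨x, hx, hxr, hZx⟩ := riskM_lt_coe_iff.1 h
  exact ⟨x, hx, hxr.le, hZx⟩

theorem exists_coe_eq_riskM
    (hC : IsClosed {p : X × ℝ | ∃ x ∈ P, V₀ x ≤ p.2 ∧ p.1 + V₁ x ∈ A})
    (hbot : riskM A P V₀ V₁ Z ≠ ⊥) (htop : riskM A P V₀ V₁ Z ≠ ⊤) :
    ∃ x ∈ P, Z + V₁ x ∈ A ∧ ((V₀ x : ℝ) : EReal) = riskM A P V₀ V₁ Z := by
  set r := (riskM A P V₀ V₁ Z).toReal
  have hr : riskM A P V₀ V₁ Z = r := (EReal.coe_toReal htop hbot).symm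
  have hZr : (Z, r) ∈ {p : X × ℝ | ∃ x ∈ P, V₀ x ≤ p.2 ∧ p.1 + V₁ x ∈ A} := by
    refine hC.mem_of_tendsto (b := 𝓝[>] r)
      (((Continuous.prodMk_right Z).tendsto r).mono_left nhdsWithin_le_nhds) ?_
    filter_upwards [self_mem_nhdsWithin] with s hs
    obtain ⟨x, hx, hxs, hZx⟩ := riskM_lt_coe_iff.1 (hr ▸ EReal.coe_lt_coe_iff.2 hs)
    exact ⟨x, hx, hxs.le, hZx⟩
  obtain ⟨x, hx, hxr, hZx⟩ := hZr
  exact ⟨x, hx, hZx, le_antisymm (hr ▸ EReal.coe_le_coe_iff.2 hxr) (riskM_le hx hZx)⟩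

end RiskMeasure

theorem stmt0_general
    {X : Type*} [AddCommGroup X] [Module ℝ X] [TopologicalSpace X]
    [IsTopologicalAddGroup X] [ContinuousSMul ℝ X]
    (Xp : Set X) (hXp_cone : ∀ c : ℝ, 0 ≤ c → ∀ z ∈ Xp, c • z ∈ Xp)
    {N : ℕ} (P : Set (Fin N → ℝ)) (V₀ : (Fin N → ℝ) → ℝ) (V₁ : (Fin N → ℝ) → X)
    (A : Set X) (hAmono : ∀ a ∈ A, ∀ p ∈ Xp, a + p ∈ A)
    (hAconv : Convex ℝ A) (hAcl : IsClosed A)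
    (hPconv : Convex ℝ P) (hPcl : IsClosed P)
    (hV₀conv : ConvexOn ℝ Set.univ V₀) (hV₀lsc : LowerSemicontinuous V₀)
    (hV₁hom : ∀ c : ℝ, 0 ≤ c → ∀ x, V₁ (c • x) = c • V₁ x)
    (hV₁super : ∀ x y, V₁ (x + y) - (V₁ x + V₁ y) ∈ Xp)
    (hV₁usc : USCV1 Xp V₁)
    (hLlin : ∃ S : Submodule ℝ (Fin N → ℝ), (S : Set (Fin N → ℝ)) = Lset A P V₀ V₁) :
    IsClosed {p : X × ℝ | ∃ x ∈ P, V₀ x ≤ p.2 ∧ p.1 + V₁ x ∈ A} ∧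
    LowerSemicontinuous (riskM A P V₀ V₁) ∧
    ∀ Z : X, riskM A P V₀ V₁ Z ≠ ⊥ → riskM A P V₀ V₁ Z ≠ ⊤ →
      ∃ x ∈ P, Z + V₁ x ∈ A ∧ ((V₀ x : ℝ) : EReal) = riskM A P V₀ V₁ Z := by
  have hC := isClosed_setOf_exists_witness hXp_cone hPconv hPcl hV₀conv hV₀lsc hAconv hAcl
    hAmono hV₁hom hV₁super hV₁usc hLlin
  exact ⟨hC, lowerSemicontinuous_riskM hC, fun _ => exists_coe_eq_riskM hC⟩

theorem stmt0
    {X : Type*} [AddCommGroup X] [Module ℝ X] [TopologicalSpace X]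
    [IsTopologicalAddGroup X] [ContinuousSMul ℝ X]
    (Xp : Set X) (hXp_cone : ∀ c : ℝ, 0 ≤ c → ∀ z ∈ Xp, c • z ∈ Xp)
    (hXp_conv : Convex ℝ Xp)
    {N : ℕ} (hN : 1 ≤ N)
    (P : Set (Fin N → ℝ)) (hP0 : (0 : Fin N → ℝ) ∈ P)
    (V₀ : (Fin N → ℝ) → ℝ) (hV₀0 : V₀ 0 = 0) (hV₀sp : ∀ x, -V₀ (-x) ≤ V₀ x)
    (V₁ : (Fin N → ℝ) → X) (hV₁0 : V₁ 0 = 0) (hV₁sp : ∀ x, -V₁ (-x) - V₁ x ∈ Xp)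
    (A : Set X) (hA0 : (0 : X) ∈ A) (hAmono : ∀ a ∈ A, ∀ p ∈ Xp, a + p ∈ A)
    (hAconv : Convex ℝ A) (hAcl : IsClosed A)
    (hPconv : Convex ℝ P) (hPcl : IsClosed P)
    (hV₀conv : ConvexOn ℝ Set.univ V₀) (hV₀lsc : LowerSemicontinuous V₀)
    (hV₁hom : ∀ c : ℝ, 0 ≤ c → ∀ x, V₁ (c • x) = c • V₁ x)
    (hV₁super : ∀ x y, V₁ (x + y) - (V₁ x + V₁ y) ∈ Xp)
    (hV₁usc : USCV1 Xp V₁)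
    (hLlin : ∃ S : Submodule ℝ (Fin N → ℝ), (S : Set (Fin N → ℝ)) = Lset A P V₀ V₁) :
    IsClosed {p : X × ℝ | ∃ x ∈ P, V₀ x ≤ p.2 ∧ p.1 + V₁ x ∈ A} ∧
    LowerSemicontinuous (riskM A P V₀ V₁) ∧
    ∀ Z : X, riskM A P V₀ V₁ Z ≠ ⊥ → riskM A P V₀ V₁ Z ≠ ⊤ →
      ∃ x ∈ P, Z + V₁ x ∈ A ∧ ((V₀ x : ℝ) : EReal) = riskM A P V₀ V₁ Z :=
  stmt0_general Xp hXp_cone P V₀ V₁ A hAmono hAconv hAcl hPconv hPcl hV₀conv hV₀lsc hV₁hom hV₁super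
    hV₁usc hLlin
end
end

section
/- If ρ is proper, quasiconvex, and lower semicontinuous, then ℬ is nonempty and for every X ∈ 𝒳 one has ρ(X) = sup over ψ ∈ ℬ of ρ(X|ψ). -/
open Topology Filter Set Pointwise

noncomputable section

/-- The support function `σ_𝒜(ψ) = inf {ψ(Z) : Z ∈ 𝒜}`. -/
def sigmaA {X : Type*} [AddCommGroup X] [Module ℝ X] [TopologicalSpace X] (A : Set X)
    (ψ : X →L[ℝ] ℝ) : EReal :=
  sInf ((fun Z => ((ψ Z : ℝ) : EReal)) '' A)

/-- The market support function `σ_{𝒫,V₀,V₁}(ψ) = inf {V₀(x) - ψ(V₁(x)) : x ∈ 𝒫}`. -/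
def sigmaPV {X : Type*} [AddCommGroup X] [Module ℝ X] [TopologicalSpace X] {N : ℕ}
    (P : Set (Fin N → ℝ)) (V₀ : (Fin N → ℝ) → ℝ) (V₁ : (Fin N → ℝ) → X)
    (ψ : X →L[ℝ] ℝ) : EReal :=
  sInf ((fun x => ((V₀ x - ψ (V₁ x) : ℝ) : EReal)) '' P)

/-- The dual set `𝒟 = {ψ ∈ 𝒳' : σ_𝒜(ψ) > -∞, σ_{𝒫,V₀,V₁}(ψ) > -∞}`. -/
def dualD {X : Type*} [AddCommGroup X] [Module ℝ X] [TopologicalSpace X] {N : ℕ}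
    (A : Set X) (P : Set (Fin N → ℝ)) (V₀ : (Fin N → ℝ) → ℝ) (V₁ : (Fin N → ℝ) → X) :
    Set (X →L[ℝ] ℝ) :=
  {ψ | sigmaA A ψ ≠ ⊥ ∧ sigmaPV P V₀ V₁ ψ ≠ ⊥}

/-!
A lower semicontinuous quasiconvex function has closed convex sublevel sets, so a point `Z` with
`ρ(Z) > r` can be strictly separated from `{ρ ≤ r}` by a continuous functional `ψ`; every `W`
with `ψ(W) ≤ ψ(Z)` then has `ρ(W) > r`, i.e. `ρ(Z|ψ) ≥ r`. For the risk measure, a nonempty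
strict sublevel set `{ρ < r}` contains a translate `𝒜 - V₁(x)` of the acceptance set, so `ψ`,
being bounded below on `{ρ ≤ r}`, is bounded below on `𝒜` and lies in the barrier cone. When
`{ρ < r}` is empty, `ψ = 0` does the job.
-/

section QuasiconvexDuality

variable {X : Type*} [AddCommGroup X] [Module ℝ X] [TopologicalSpace X]
  [IsTopologicalAddGroup X] [ContinuousSMul ℝ X] [LocallyConvexSpace ℝ X] {f : X → EReal}

theorem QuasiconvexOn.exists_dual_separating_sublevel (hq : QuasiconvexOn ℝ univ f)
    (hf : LowerSemicontinuous f) {r : EReal} {Z : X} (hZ : r < f Z) :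
    ∃ (ψ : X →L[ℝ] ℝ) (u : ℝ), (∀ W, f W ≤ r → u < ψ W) ∧ ∀ W, ψ W ≤ ψ Z → r < f W := by
  have hconv : Convex ℝ {W | f W ≤ r} := by simpa only [sep_univ] using hq r
  obtain ⟨ψ, u, hψZ, hψ⟩ :=
    geometric_hahn_banach_point_closed hconv (hf.isClosed_preimage r) hZ.not_ge
  refine ⟨ψ, u, hψ, fun W hW => ?_⟩
  by_contra! hWr
  exact (hψ W hWr).not_ge (hW.trans hψZ.le)

theorem QuasiconvexOn.eq_iSup_sInf_halfspace (hq : QuasiconvexOn ℝ univ f)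
    (hf : LowerSemicontinuous f) {Ψ : Set (X →L[ℝ] ℝ)} (h0 : 0 ∈ Ψ)
    (hΨ : ∀ (r : EReal) (ψ : X →L[ℝ] ℝ) (u : ℝ),
      (∃ Y, f Y < r) → (∀ W, f W ≤ r → u < ψ W) → ψ ∈ Ψ)
    (Z : X) :
    f Z = ⨆ ψ ∈ Ψ, sInf (f '' {W | ψ W ≤ ψ Z}) := by
  refine le_antisymm ?_ (iSup₂_le fun ψ _ => sInf_le ⟨Z, le_refl (ψ Z), rfl⟩)
  by_contra! hlt
  obtain ⟨r, hsup, hrZ⟩ := exists_between hlt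
  suffices ∃ ψ ∈ Ψ, ∀ W, ψ W ≤ ψ Z → r ≤ f W by
    obtain ⟨ψ, hψ, hr⟩ := this
    have hr_le : r ≤ sInf (f '' {W | ψ W ≤ ψ Z}) :=
      le_sInf (by rintro _ ⟨W, hW, rfl⟩; exact hr W hW)
    exact (hsup.trans_le (hr_le.trans (le_biSup (fun φ => sInf (f '' {W | φ W ≤ φ Z})) hψ))).false
  by_cases hlow : ∃ Y, f Y < r
  · obtain ⟨ψ, u, hψu, hψZ⟩ := hq.exists_dual_separating_sublevel hf hrZ
    exact ⟨ψ, hΨ r ψ u hlow hψu, fun W hW => (hψZ W hW).le⟩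
  · exact ⟨0, h0, fun W _ => not_lt.1 fun hW => hlow ⟨W, hW⟩⟩

end QuasiconvexDuality

section RiskMeasure

variable {X : Type*} [AddCommGroup X] {N : ℕ} {A : Set X} {P : Set (Fin N → ℝ)}
  {V₀ : (Fin N → ℝ) → ℝ} {V₁ : (Fin N → ℝ) → X}

theorem riskM_sub_le {a : X} (ha : a ∈ A) {x : Fin N → ℝ} (hx : x ∈ P) :
    riskM A P V₀ V₁ (a - V₁ x) ≤ V₀ x :=
  sInf_le ⟨x, ⟨hx, by rwa [sub_add_cancel]⟩, rfl⟩

variable [Module ℝ X] [TopologicalSpace X]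

theorem sigmaA_ne_bot_of_le {ψ : X →L[ℝ] ℝ} (u : ℝ) (h : ∀ a ∈ A, u ≤ ψ a) :
    sigmaA A ψ ≠ ⊥ :=
  ne_bot_of_le_ne_bot (EReal.coe_ne_bot u)
    (le_sInf (by rintro _ ⟨a, ha, rfl⟩; exact EReal.coe_le_coe_iff.2 (h a ha)))

theorem sigmaA_zero_ne_bot : sigmaA A (0 : X →L[ℝ] ℝ) ≠ ⊥ :=
  sigmaA_ne_bot_of_le 0 fun _ _ => le_rfl

theorem sigmaA_ne_bot_of_bddBelow_sublevel {r : EReal} {ψ : X →L[ℝ] ℝ} {u : ℝ}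
    (hY : ∃ Y, riskM A P V₀ V₁ Y < r) (hψ : ∀ W, riskM A P V₀ V₁ W ≤ r → u < ψ W) :
    sigmaA A ψ ≠ ⊥ := by
  obtain ⟨Y, hY⟩ := hY
  obtain ⟨_, ⟨x, ⟨hxP, -⟩, rfl⟩, hxr⟩ := sInf_lt_iff.1 hY
  refine sigmaA_ne_bot_of_le (u + ψ (V₁ x)) fun a ha => ?_
  have hsub := hψ (a - V₁ x) ((riskM_sub_le ha hxP).trans hxr.le)
  rw [map_sub] at hsub
  linarith

end RiskMeasure

theorem stmt5_general
    {X : Type*} [AddCommGroup X] [Module ℝ X] [TopologicalSpace X]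
    [IsTopologicalAddGroup X] [ContinuousSMul ℝ X]
    [LocallyConvexSpace ℝ X]
    {N : ℕ}
    (P : Set (Fin N → ℝ))
    (V₀ : (Fin N → ℝ) → ℝ)
    (V₁ : (Fin N → ℝ) → X)
    (A : Set X)
    (hqconv : ∀ l : ℝ, 0 ≤ l → l ≤ 1 → ∀ Z W : X,
      riskM A P V₀ V₁ (l • Z + (1 - l) • W) ≤
        max (riskM A P V₀ V₁ Z) (riskM A P V₀ V₁ W))
    (hlsc : LowerSemicontinuous (riskM A P V₀ V₁)) :
    {ψ : X →L[ℝ] ℝ | sigmaA A ψ ≠ ⊥}.Nonempty ∧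
    ∀ Z : X, riskM A P V₀ V₁ Z =
      ⨆ ψ ∈ {ψ : X →L[ℝ] ℝ | sigmaA A ψ ≠ ⊥},
        sInf (riskM A P V₀ V₁ '' {W : X | ψ W ≤ ψ Z}) := by
  have hq : QuasiconvexOn ℝ univ (riskM A P V₀ V₁) := by
    refine quasiconvexOn_iff_le_max.2 ⟨convex_univ, fun Z _ W _ a b ha _ hab => ?_⟩
    obtain rfl : b = 1 - a := by linarith
    exact hqconv a ha (by linarith) Z W
  exact ⟨⟨0, sigmaA_zero_ne_bot⟩, hq.eq_iSup_sInf_halfspace hlsc sigmaA_zero_ne_bot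
    fun _ _ _ hY hψ => sigmaA_ne_bot_of_bddBelow_sublevel hY hψ⟩

theorem stmt5
    {X : Type*} [AddCommGroup X] [Module ℝ X] [TopologicalSpace X]
    [IsTopologicalAddGroup X] [ContinuousSMul ℝ X]
    [LocallyConvexSpace ℝ X] [T2Space X]
    (Xp : Set X) (hXp_cone : ∀ c : ℝ, 0 ≤ c → ∀ z ∈ Xp, c • z ∈ Xp)
    (hXp_conv : Convex ℝ Xp)
    {N : ℕ} (hN : 1 ≤ N)
    (P : Set (Fin N → ℝ)) (hP0 : (0 : Fin N → ℝ) ∈ P)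
    (V₀ : (Fin N → ℝ) → ℝ) (hV₀0 : V₀ 0 = 0) (hV₀sp : ∀ x, -V₀ (-x) ≤ V₀ x)
    (V₁ : (Fin N → ℝ) → X) (hV₁0 : V₁ 0 = 0) (hV₁sp : ∀ x, -V₁ (-x) - V₁ x ∈ Xp)
    (A : Set X) (hA0 : (0 : X) ∈ A) (hAmono : ∀ a ∈ A, ∀ p ∈ Xp, a + p ∈ A)
    (hproper_bot : ∀ Z : X, riskM A P V₀ V₁ Z ≠ ⊥)
    (hproper_top : ∃ Z : X, riskM A P V₀ V₁ Z ≠ ⊤)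
    (hqconv : ∀ l : ℝ, 0 ≤ l → l ≤ 1 → ∀ Z W : X,
      riskM A P V₀ V₁ (l • Z + (1 - l) • W) ≤
        max (riskM A P V₀ V₁ Z) (riskM A P V₀ V₁ W))
    (hlsc : LowerSemicontinuous (riskM A P V₀ V₁)) :
    {ψ : X →L[ℝ] ℝ | sigmaA A ψ ≠ ⊥}.Nonempty ∧
    ∀ Z : X, riskM A P V₀ V₁ Z =
      ⨆ ψ ∈ {ψ : X →L[ℝ] ℝ | sigmaA A ψ ≠ ⊥},
        sInf (riskM A P V₀ V₁ '' {W : X | ψ W ≤ ψ Z}) :=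
  stmt5_general P V₀ V₁ A hqconv hlsc
end
end

section
/- Assume that 𝒜 is convex and closed, 𝒫 is convex and closed, V₀ is convex and lower semicontinuous, and V₁ is superlinear (positively homogeneous: V₁(λx) = λV₁(x) for all λ ≥ 0 and x, and superadditive: V₁(x+y) ≥ V₁(x) + V₁(y) for all x, y). Then 𝒩 := ℒ ∩ (−ℒ) is a linear subspace of ℝ^N, and for every (X,m) ∈ 𝒞 there exists x ∈ 𝒫 lying in the orthogonal complement of 𝒩 within span(𝒫) such that V₀(x) ≤ m and X + V₁(x) ∈ 𝒜. -/
open Topology Filter Set Pointwise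

noncomputable section

/-! For a closed convex set `C ∋ 0`, the asymptotic cone is the set of directions `z` with
`t • z ∈ C` for all `t ≥ 0`, and adding such a direction to a point of `C` stays in `C`. Thus
`ℒ` consists of the directions of recession of `𝒫`, of the epigraph of `V₀` and of `𝒜`
(through `V₁`), it is a convex cone by convexity and superlinearity of `V₁`, and `𝒩` is its
lineality space. Writing a feasible `x` as `n + w` with `n ∈ 𝒩` and `w ⊥ 𝒩`, the point
`w = x + (-n)` is again feasible because `-n ∈ ℒ`, and lies in `span 𝒫` since `x, n ∈ 𝒫`. -/

section AsymptoticCone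

variable {E : Type*} [AddCommGroup E] [Module ℝ E] {C : Set E}

theorem Convex.smul_add_mem_of_forall_smul_mem (hconv : Convex ℝ C) {x y : E}
    (hx : ∀ t : ℝ, 0 ≤ t → t • x ∈ C) (hy : ∀ t : ℝ, 0 ≤ t → t • y ∈ C) :
    ∀ t : ℝ, 0 ≤ t → t • (x + y) ∈ C := by
  intro t ht
  have h2t : (0 : ℝ) ≤ 2 * t := by linarith
  convert hconv (hx _ h2t) (hy _ h2t) (by norm_num : (0 : ℝ) ≤ 1 / 2)
    (by norm_num : (0 : ℝ) ≤ 1 / 2) (by norm_num) using 1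
  rw [smul_smul, smul_smul, show (1 / 2 : ℝ) * (2 * t) = t by ring, smul_add]

variable [TopologicalSpace E]

theorem asymCone_eq_of_zero_mem [ContinuousConstSMul ℝ E] (hconv : Convex ℝ C)
    (hcl : IsClosed C) (h0 : (0 : E) ∈ C) :
    asymCone C = {z | ∀ t : ℝ, 0 ≤ t → t • z ∈ C} := by
  ext z
  refine ⟨fun hz t ht => ?_, fun hz U hU ε hε => ?_⟩
  · rcases ht.eq_or_lt with rfl | ht
    · simpa using h0
    rw [← hcl.closure_eq, mem_closure_iff_nhds]
    intro U hU
    obtain ⟨c, hc, l, hl0, hlt, hlc⟩ :=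
      hz _ ((continuous_const_smul t).continuousAt.preimage_mem_nhds hU) (1 / t) (one_div_pos.2 ht)
    refine ⟨t • l • c, hlc, ?_⟩
    rw [smul_smul]
    exact hconv.smul_mem_of_zero_mem h0 hc
      ⟨mul_nonneg ht.le hl0, (le_div_iff₀' ht).1 hlt.le⟩
  · refine ⟨(2 / ε) • z, hz _ (by positivity), ε / 2, by positivity, by linarith, ?_⟩
    rw [smul_smul, div_mul_div_cancel₀ two_ne_zero, div_self hε.ne', one_smul]
    exact mem_of_mem_nhds hU

theorem IsClosed.add_mem_of_forall_smul_mem [ContinuousAdd E] [ContinuousSMul ℝ E]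
    (hcl : IsClosed C) (hconv : Convex ℝ C) {c z : E} (hc : c ∈ C)
    (hz : ∀ t : ℝ, 0 ≤ t → t • z ∈ C) : c + z ∈ C := by
  have hlim : Tendsto (fun s : ℝ => (1 - s) • c + z) (𝓝[>] 0) (𝓝 (c + z)) := by
    have hcont : Continuous fun s : ℝ => (1 - s) • c + z := by fun_prop
    simpa using hcont.continuousWithinAt.tendsto (s := Ioi 0) (x := 0)
  refine hcl.mem_of_tendsto hlim ?_
  filter_upwards [Ioo_mem_nhdsGT one_pos] with s ⟨hs0, hs1⟩
  have hsz : s • s⁻¹ • z = z := smul_inv_smul₀ hs0.ne' z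
  simpa [hsz] using hconv hc (hz s⁻¹ (inv_nonneg.2 hs0.le)) (by linarith) hs0.le (by ring)

end AsymptoticCone

section Epigraph

variable {E : Type*} [AddCommGroup E] [Module ℝ E] {f : E → ℝ}

theorem ConvexOn.convex_epigraph_univ (hf : ConvexOn ℝ univ f) : Convex ℝ (epigraph f) := by
  simpa [epigraph] using hf.convex_epigraph

variable [TopologicalSpace E]

theorem mk_zero_mem_asymCone_epigraph_iff [ContinuousConstSMul ℝ E] (hf : ConvexOn ℝ univ f)
    (hlsc : LowerSemicontinuous f) (h0 : f 0 ≤ 0) {x : E} :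
    (x, (0 : ℝ)) ∈ asymCone (epigraph f) ↔ ∀ t : ℝ, 0 ≤ t → f (t • x) ≤ 0 := by
  rw [asymCone_eq_of_zero_mem hf.convex_epigraph_univ hlsc.isClosed_epigraph (by simpa [epigraph])]
  simp [epigraph]

theorem ConvexOn.map_add_le_of_forall_map_smul_nonpos [ContinuousAdd E] [ContinuousSMul ℝ E]
    (hf : ConvexOn ℝ univ f) (hlsc : LowerSemicontinuous f) {x y : E}
    (hy : ∀ t : ℝ, 0 ≤ t → f (t • y) ≤ 0) : f (x + y) ≤ f x := by
  have h := hlsc.isClosed_epigraph.add_mem_of_forall_smul_mem hf.convex_epigraph_univ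
    (c := (x, f x)) (z := (y, 0)) (le_refl (f x)) (fun t ht => by simpa [epigraph] using hy t ht)
  simpa [epigraph] using h

end Epigraph

theorem Submodule.exists_mem_forall_sub_dotProduct_eq_zero {ι : Type*} [Fintype ι]
    (S : Submodule ℝ (ι → ℝ)) (x : ι → ℝ) : ∃ n ∈ S, ∀ y ∈ S, (x - n) ⬝ᵥ y = 0 := by
  let e := (WithLp.linearEquiv 2 ℝ (ι → ℝ)).symm
  obtain ⟨_, ⟨n, hn, rfl⟩, w, hw, hxw⟩ := (S.map e.toLinearMap).exists_add_mem_mem_orthogonal (e x)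
  refine ⟨n, hn, fun y hy => ?_⟩
  have hwx : w = e (x - n) := by rw [map_sub, hxw]; simp
  have h := (Submodule.mem_orthogonal _ w).1 hw (e y) ⟨y, hy, rfl⟩
  rw [hwx, EuclideanSpace.inner_eq_star_dotProduct] at h
  simpa [e, dotProduct_comm] using h

section Lset

variable {X : Type*} [AddCommGroup X] [Module ℝ X] [TopologicalSpace X] {N : ℕ}
  {Xp A : Set X} {P : Set (Fin N → ℝ)} {V₀ : (Fin N → ℝ) → ℝ} {V₁ : (Fin N → ℝ) → X}

theorem mem_Lset_iff [ContinuousConstSMul ℝ X] (hAconv : Convex ℝ A) (hAcl : IsClosed A)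
    (hA0 : (0 : X) ∈ A) (hPconv : Convex ℝ P) (hPcl : IsClosed P) (hP0 : 0 ∈ P)
    (hV₀conv : ConvexOn ℝ univ V₀) (hV₀lsc : LowerSemicontinuous V₀) (hV₀0 : V₀ 0 ≤ 0)
    {x : Fin N → ℝ} :
    x ∈ Lset A P V₀ V₁ ↔ (∀ t : ℝ, 0 ≤ t → t • x ∈ P) ∧
      (∀ t : ℝ, 0 ≤ t → V₀ (t • x) ≤ 0) ∧ ∀ t : ℝ, 0 ≤ t → t • V₁ x ∈ A := by
  rw [Lset, mem_ofPred_eq, asymCone_eq_of_zero_mem hPconv hPcl hP0,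
    asymCone_eq_of_zero_mem hAconv hAcl hA0,
    mk_zero_mem_asymCone_epigraph_iff hV₀conv hV₀lsc hV₀0]
  rfl

theorem exists_pointedCone_coe_eq_Lset [ContinuousConstSMul ℝ X] (hAconv : Convex ℝ A)
    (hAcl : IsClosed A) (hA0 : (0 : X) ∈ A) (hAmono : ∀ a ∈ A, ∀ p ∈ Xp, a + p ∈ A)
    (hPconv : Convex ℝ P) (hPcl : IsClosed P) (hP0 : 0 ∈ P)
    (hV₀conv : ConvexOn ℝ univ V₀) (hV₀lsc : LowerSemicontinuous V₀) (hV₀0 : V₀ 0 ≤ 0)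
    (hV₁hom : ∀ c : ℝ, 0 ≤ c → ∀ x, V₁ (c • x) = c • V₁ x)
    (hV₁super : ∀ x y, V₁ (x + y) - (V₁ x + V₁ y) ∈ Xp) :
    ∃ L : PointedCone ℝ (Fin N → ℝ), (L : Set (Fin N → ℝ)) = Lset A P V₀ V₁ := by
  have hL := fun x => mem_Lset_iff (V₁ := V₁) (x := x) hAconv hAcl hA0 hPconv hPcl hP0
    hV₀conv hV₀lsc hV₀0
  have hV₁0 : V₁ 0 = 0 := by simpa using hV₁hom 0 le_rfl 0
  refine ⟨{ carrier := Lset A P V₀ V₁, add_mem' := ?_, zero_mem' := ?_, smul_mem' := ?_ }, rfl⟩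
  · intro x y hx hy
    rw [hL] at hx hy ⊢
    have hV₀sub : Convex ℝ {z | V₀ z ≤ 0} := by simpa using hV₀conv.convex_le 0
    refine ⟨hPconv.smul_add_mem_of_forall_smul_mem hx.1 hy.1,
      hV₀sub.smul_add_mem_of_forall_smul_mem hx.2.1 hy.2.1, fun t ht => ?_⟩
    have hsum := hAconv.smul_add_mem_of_forall_smul_mem hx.2.2 hy.2.2 t ht
    convert hAmono _ hsum _ (hV₁super (t • x) (t • y)) using 1
    rw [← hV₁hom t ht, smul_add, hV₁hom t ht, hV₁hom t ht, smul_add]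
    abel
  · simp only [hL, smul_zero, hV₁0]
    exact ⟨fun _ _ => hP0, fun _ _ => hV₀0, fun _ _ => hA0⟩
  · rintro ⟨c, hc⟩ x hx
    simp only [hL, Nonneg.mk_smul, hV₁hom c hc, smul_smul] at hx ⊢
    exact ⟨fun t ht => hx.1 _ (mul_nonneg ht hc), fun t ht => hx.2.1 _ (mul_nonneg ht hc),
      fun t ht => hx.2.2 _ (mul_nonneg ht hc)⟩

end Lset

theorem stmt8_general
    {X : Type*} [AddCommGroup X] [Module ℝ X] [TopologicalSpace X]
    [IsTopologicalAddGroup X] [ContinuousSMul ℝ X]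
    (Xp : Set X)
    {N : ℕ}
    (P : Set (Fin N → ℝ)) (hP0 : (0 : Fin N → ℝ) ∈ P)
    (V₀ : (Fin N → ℝ) → ℝ) (hV₀0 : V₀ 0 = 0)
    (V₁ : (Fin N → ℝ) → X)
    (A : Set X) (hA0 : (0 : X) ∈ A) (hAmono : ∀ a ∈ A, ∀ p ∈ Xp, a + p ∈ A)
    (hAconv : Convex ℝ A) (hAcl : IsClosed A)
    (hPconv : Convex ℝ P) (hPcl : IsClosed P)
    (hV₀conv : ConvexOn ℝ Set.univ V₀) (hV₀lsc : LowerSemicontinuous V₀)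
    (hV₁hom : ∀ c : ℝ, 0 ≤ c → ∀ x, V₁ (c • x) = c • V₁ x)
    (hV₁super : ∀ x y, V₁ (x + y) - (V₁ x + V₁ y) ∈ Xp) :
    (∃ S : Submodule ℝ (Fin N → ℝ),
      (S : Set (Fin N → ℝ)) = Lset A P V₀ V₁ ∩ (-(Lset A P V₀ V₁))) ∧
    ∀ Z : X, ∀ m : ℝ, (∃ x ∈ P, V₀ x ≤ m ∧ Z + V₁ x ∈ A) →
      ∃ x ∈ P, x ∈ Submodule.span ℝ P ∧
        (∀ y ∈ Lset A P V₀ V₁ ∩ (-(Lset A P V₀ V₁)), ∑ i, x i * y i = 0) ∧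
        V₀ x ≤ m ∧ Z + V₁ x ∈ A := by
  have hL := fun x => mem_Lset_iff (V₁ := V₁) (x := x) hAconv hAcl hA0 hPconv hPcl hP0
    hV₀conv hV₀lsc hV₀0.le
  obtain ⟨L, hLcoe⟩ := exists_pointedCone_coe_eq_Lset hAconv hAcl hA0 hAmono hPconv hPcl hP0
    hV₀conv hV₀lsc hV₀0.le hV₁hom hV₁super
  have hS : (L.lineal : Set (Fin N → ℝ)) = Lset A P V₀ V₁ ∩ -Lset A P V₀ V₁ := by
    ext; simp [← hLcoe]
  refine ⟨⟨L.lineal, hS⟩, ?_⟩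
  rintro Z m ⟨x, hxP, hxm, hxA⟩
  obtain ⟨n, hn, horth⟩ := L.lineal.exists_mem_forall_sub_dotProduct_eq_zero x
  obtain ⟨hnL, hnL'⟩ := PointedCone.mem_lineal.1 hn
  have hnP : n ∈ P := by simpa using ((hL n).1 (hLcoe ▸ hnL)).1 1 zero_le_one
  obtain ⟨hP', hV₀', hA'⟩ := (hL (-n)).1 (hLcoe ▸ hnL')
  refine ⟨x - n, ?_, sub_mem (Submodule.subset_span hxP) (Submodule.subset_span hnP),
    fun y hy => horth y (SetLike.mem_coe.1 (hS ▸ hy)), ?_, ?_⟩ <;> rw [sub_eq_add_neg]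
  · exact hPcl.add_mem_of_forall_smul_mem hPconv hxP hP'
  · exact (hV₀conv.map_add_le_of_forall_map_smul_nonpos hV₀lsc hV₀').trans hxm
  · convert hAmono _ (hAcl.add_mem_of_forall_smul_mem hAconv hxA hA') _ (hV₁super x (-n))
      using 1
    abel

theorem stmt8
    {X : Type*} [AddCommGroup X] [Module ℝ X] [TopologicalSpace X]
    [IsTopologicalAddGroup X] [ContinuousSMul ℝ X]
    (Xp : Set X) (hXp_cone : ∀ c : ℝ, 0 ≤ c → ∀ z ∈ Xp, c • z ∈ Xp)
    (hXp_conv : Convex ℝ Xp)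
    {N : ℕ} (hN : 1 ≤ N)
    (P : Set (Fin N → ℝ)) (hP0 : (0 : Fin N → ℝ) ∈ P)
    (V₀ : (Fin N → ℝ) → ℝ) (hV₀0 : V₀ 0 = 0) (hV₀sp : ∀ x, -V₀ (-x) ≤ V₀ x)
    (V₁ : (Fin N → ℝ) → X) (hV₁0 : V₁ 0 = 0) (hV₁sp : ∀ x, -V₁ (-x) - V₁ x ∈ Xp)
    (A : Set X) (hA0 : (0 : X) ∈ A) (hAmono : ∀ a ∈ A, ∀ p ∈ Xp, a + p ∈ A)
    (hAconv : Convex ℝ A) (hAcl : IsClosed A)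
    (hPconv : Convex ℝ P) (hPcl : IsClosed P)
    (hV₀conv : ConvexOn ℝ Set.univ V₀) (hV₀lsc : LowerSemicontinuous V₀)
    (hV₁hom : ∀ c : ℝ, 0 ≤ c → ∀ x, V₁ (c • x) = c • V₁ x)
    (hV₁super : ∀ x y, V₁ (x + y) - (V₁ x + V₁ y) ∈ Xp) :
    (∃ S : Submodule ℝ (Fin N → ℝ),
      (S : Set (Fin N → ℝ)) = Lset A P V₀ V₁ ∩ (-(Lset A P V₀ V₁))) ∧
    ∀ Z : X, ∀ m : ℝ, (∃ x ∈ P, V₀ x ≤ m ∧ Z + V₁ x ∈ A) →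
      ∃ x ∈ P, x ∈ Submodule.span ℝ P ∧
        (∀ y ∈ Lset A P V₀ V₁ ∩ (-(Lset A P V₀ V₁)), ∑ i, x i * y i = 0) ∧
        V₀ x ≤ m ∧ Z + V₁ x ∈ A :=
  stmt8_general Xp P hP0 V₀ hV₀0 V₁ A hA0 hAmono hAconv hAcl hPconv hPcl hV₀conv hV₀lsc hV₁hom
    hV₁super
end
end

section
/- Assume that 𝒜 is closed and star shaped, 𝒫 is closed and star shaped, and V₀ is lower semicontinuous and star shaped. Then for every scalable acceptable deal x ∈ ℝ^N and every λ > 0 one has λx ∈ 𝒫, V₀(λx) ≤ 0, and λV₁(x) ∈ 𝒜. In particular, every scalable acceptable deal is an acceptable deal, i.e. x ∈ 𝒫, V₀(x) ≤ 0, and V₁(x) ∈ 𝒜 with V₁(x) ≠ 0. -/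
open Topology Filter Set Pointwise

noncomputable section

/-! A closed set `C` that is star shaped about the origin contains every positive multiple of each
direction `z` of its asymptotic cone: approximating `t • z` by `t • (l • c)` with `c ∈ C` and
`l < 1 / t`, the points `(t * l) • c` lie in `C`, and closedness passes to the limit. Apply this to
`𝒫`, `𝒜` and the epigraph of `V₀`, which is closed by lower semicontinuity and star shaped because
`V₀` is. -/

theorem smul_mem_of_mem_asymCone {E : Type*} [AddCommMonoid E] [MulAction ℝ E]
    [TopologicalSpace E] [ContinuousConstSMul ℝ E] {C : Set E} (hC : IsClosed C)
    (hstar : ∀ l : ℝ, 0 ≤ l → l ≤ 1 → ∀ c ∈ C, l • c ∈ C)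
    {z : E} (hz : z ∈ asymCone C) {t : ℝ} (ht : 0 < t) : t • z ∈ C := by
  rw [← hC.closure_eq, mem_closure_iff_nhds]
  intro U hU
  have hU' : (t • ·) ⁻¹' U ∈ 𝓝 z :=
    (continuous_const_smul t).continuousAt.preimage_mem_nhds hU
  obtain ⟨c, hc, l, hl0, hlt, hmem⟩ := hz _ hU' (1 / t) (by positivity)
  have htl : t * l ≤ 1 := by
    rw [lt_div_iff₀ ht] at hlt
    linarith
  refine ⟨t • l • c, hmem, ?_⟩
  rw [smul_smul]
  exact hstar _ (by positivity) htl c hc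

theorem smul_mem_epigraph {E : Type*} [MulAction ℝ E] {f : E → ℝ}
    (hf : ∀ l : ℝ, 0 ≤ l → l ≤ 1 → ∀ x, f (l • x) ≤ l * f x)
    {l : ℝ} (hl0 : 0 ≤ l) (hl1 : l ≤ 1) {p : E × ℝ} (hp : p ∈ epigraph f) :
    l • p ∈ epigraph f :=
  calc f (l • p.1) ≤ l * f p.1 := hf l hl0 hl1 p.1
    _ ≤ l * p.2 := mul_le_mul_of_nonneg_left hp hl0

theorem stmt9_general
    {X : Type*} [AddCommGroup X] [Module ℝ X] [TopologicalSpace X]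
    [ContinuousSMul ℝ X]
    {N : ℕ}
    (P : Set (Fin N → ℝ))
    (V₀ : (Fin N → ℝ) → ℝ)
    (V₁ : (Fin N → ℝ) → X)
    (A : Set X)
    (hAcl : IsClosed A) (hAstar : ∀ l : ℝ, 0 ≤ l → l ≤ 1 → ∀ a ∈ A, l • a ∈ A)
    (hPcl : IsClosed P) (hPstar : ∀ l : ℝ, 0 ≤ l → l ≤ 1 → ∀ x ∈ P, l • x ∈ P)
    (hV₀lsc : LowerSemicontinuous V₀)
    (hV₀star : ∀ l : ℝ, 0 ≤ l → l ≤ 1 → ∀ x, V₀ (l • x) ≤ l * V₀ x) :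
    ∀ x : Fin N → ℝ, x ∈ Lset A P V₀ V₁ → V₁ x ≠ 0 →
      (∀ l : ℝ, 0 < l → l • x ∈ P ∧ V₀ (l • x) ≤ 0 ∧ l • V₁ x ∈ A) ∧
      (x ∈ P ∧ V₀ x ≤ 0 ∧ V₁ x ∈ A ∧ V₁ x ≠ 0) := by
  rintro x ⟨hxP, hxV₀, hxA⟩ hne
  have scaled : ∀ l : ℝ, 0 < l → l • x ∈ P ∧ V₀ (l • x) ≤ 0 ∧ l • V₁ x ∈ A := by
    intro l hl
    have hepi : l • (x, (0 : ℝ)) ∈ epigraph V₀ :=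
      smul_mem_of_mem_asymCone hV₀lsc.isClosed_epigraph
        (fun _ hl0 hl1 _ hp => smul_mem_epigraph hV₀star hl0 hl1 hp) hxV₀ hl
    refine ⟨smul_mem_of_mem_asymCone hPcl hPstar hxP hl, ?_,
      smul_mem_of_mem_asymCone hAcl hAstar hxA hl⟩
    simpa [epigraph] using hepi
  obtain ⟨hP, hV₀, hA⟩ := scaled 1 one_pos
  rw [one_smul] at hP hV₀ hA
  exact ⟨scaled, hP, hV₀, hA, hne⟩

theorem stmt9
    {X : Type*} [AddCommGroup X] [Module ℝ X] [TopologicalSpace X]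
    [IsTopologicalAddGroup X] [ContinuousSMul ℝ X]
    (Xp : Set X) (hXp_cone : ∀ c : ℝ, 0 ≤ c → ∀ z ∈ Xp, c • z ∈ Xp)
    (hXp_conv : Convex ℝ Xp)
    {N : ℕ} (hN : 1 ≤ N)
    (P : Set (Fin N → ℝ)) (hP0 : (0 : Fin N → ℝ) ∈ P)
    (V₀ : (Fin N → ℝ) → ℝ) (hV₀0 : V₀ 0 = 0) (hV₀sp : ∀ x, -V₀ (-x) ≤ V₀ x)
    (V₁ : (Fin N → ℝ) → X) (hV₁0 : V₁ 0 = 0) (hV₁sp : ∀ x, -V₁ (-x) - V₁ x ∈ Xp)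
    (A : Set X) (hA0 : (0 : X) ∈ A) (hAmono : ∀ a ∈ A, ∀ p ∈ Xp, a + p ∈ A)
    (hAcl : IsClosed A) (hAstar : ∀ l : ℝ, 0 ≤ l → l ≤ 1 → ∀ a ∈ A, l • a ∈ A)
    (hPcl : IsClosed P) (hPstar : ∀ l : ℝ, 0 ≤ l → l ≤ 1 → ∀ x ∈ P, l • x ∈ P)
    (hV₀lsc : LowerSemicontinuous V₀)
    (hV₀star : ∀ l : ℝ, 0 ≤ l → l ≤ 1 → ∀ x, V₀ (l • x) ≤ l * V₀ x) :
    ∀ x : Fin N → ℝ, x ∈ Lset A P V₀ V₁ → V₁ x ≠ 0 →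
      (∀ l : ℝ, 0 < l → l • x ∈ P ∧ V₀ (l • x) ≤ 0 ∧ l • V₁ x ∈ A) ∧
      (x ∈ P ∧ V₀ x ≤ 0 ∧ V₁ x ∈ A ∧ V₁ x ≠ 0) :=
  stmt9_general P V₀ V₁ A hAcl hAstar hPcl hPstar hV₀lsc hV₀star
end
end

section
/- If 𝒜 and 𝒫 are star shaped, V₀ is star shaped, and V₁ is anti-star shaped, then ρ is star shaped; equivalently, ρ(λX) ≥ λρ(X) for every λ ≥ 1 and every X ∈ 𝒳 (in the extended reals). -/
open Topology Filter Set Pointwise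

noncomputable section

theorem riskM_le_of_mem {X : Type*} [AddCommMonoid X] {N : ℕ} {A : Set X}
    {P : Set (Fin N → ℝ)} {V₀ : (Fin N → ℝ) → ℝ} {V₁ : (Fin N → ℝ) → X} {Z : X}
    {x : Fin N → ℝ} (hxP : x ∈ P) (hxA : Z + V₁ x ∈ A) :
    riskM A P V₀ V₁ Z ≤ V₀ x :=
  sInf_le ⟨x, ⟨hxP, hxA⟩, rfl⟩

section StarShaped

variable {X : Type*} [AddCommGroup X] [Module ℝ X] {N : ℕ} {Xp A : Set X}
  {P : Set (Fin N → ℝ)} {V₀ : (Fin N → ℝ) → ℝ} {V₁ : (Fin N → ℝ) → X}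

theorem smul_add_mem_of_starShaped (hAmono : ∀ a ∈ A, ∀ p ∈ Xp, a + p ∈ A)
    (hAstar : ∀ l : ℝ, 0 ≤ l → l ≤ 1 → ∀ a ∈ A, l • a ∈ A)
    (hV₁anti : ∀ l : ℝ, 0 ≤ l → l ≤ 1 → ∀ x, V₁ (l • x) - l • V₁ x ∈ Xp)
    {μ : ℝ} (hμ0 : 0 ≤ μ) (hμ1 : μ ≤ 1) {Z : X} {x : Fin N → ℝ} (hxA : Z + V₁ x ∈ A) :
    μ • Z + V₁ (μ • x) ∈ A := by
  have h := hAmono _ (hAstar μ hμ0 hμ1 _ hxA) _ (hV₁anti μ hμ0 hμ1 x)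
  rwa [smul_add, add_add_sub_cancel] at h

/-- Rescaling a hedge `x` of `l • Z` by `l⁻¹` gives a hedge of `Z` costing at most `l⁻¹ * V₀ x`. -/
theorem mul_riskM_le_of_mem (hAmono : ∀ a ∈ A, ∀ p ∈ Xp, a + p ∈ A)
    (hAstar : ∀ l : ℝ, 0 ≤ l → l ≤ 1 → ∀ a ∈ A, l • a ∈ A)
    (hPstar : ∀ l : ℝ, 0 ≤ l → l ≤ 1 → ∀ x ∈ P, l • x ∈ P)
    (hV₀star : ∀ l : ℝ, 0 ≤ l → l ≤ 1 → ∀ x, V₀ (l • x) ≤ l * V₀ x)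
    (hV₁anti : ∀ l : ℝ, 0 ≤ l → l ≤ 1 → ∀ x, V₁ (l • x) - l • V₁ x ∈ Xp)
    {l : ℝ} (hl : 1 ≤ l) {Z : X} {x : Fin N → ℝ} (hxP : x ∈ P) (hxA : l • Z + V₁ x ∈ A) :
    (l : EReal) * riskM A P V₀ V₁ Z ≤ V₀ x := by
  have hl0 : 0 < l := zero_lt_one.trans_le hl
  have hμ0 : 0 ≤ l⁻¹ := inv_nonneg.2 hl0.le
  have hμ1 : l⁻¹ ≤ 1 := inv_le_one_of_one_le₀ hl
  have hfeas : Z + V₁ (l⁻¹ • x) ∈ A := by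
    simpa [smul_smul, hl0.ne'] using
      smul_add_mem_of_starShaped hAmono hAstar hV₁anti hμ0 hμ1 hxA
  calc (l : EReal) * riskM A P V₀ V₁ Z ≤ (l : EReal) * (V₀ (l⁻¹ • x) : EReal) :=
        mul_le_mul_of_nonneg_left (riskM_le_of_mem (hPstar _ hμ0 hμ1 x hxP) hfeas)
          (EReal.coe_nonneg.2 hl0.le)
    _ = ((l * V₀ (l⁻¹ • x) : ℝ) : EReal) := (EReal.coe_mul _ _).symm
    _ ≤ V₀ x := by
        refine EReal.coe_le_coe_iff.2 ?_
        calc l * V₀ (l⁻¹ • x) ≤ l * (l⁻¹ * V₀ x) :=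
              mul_le_mul_of_nonneg_left (hV₀star _ hμ0 hμ1 x) hl0.le
          _ = V₀ x := by rw [mul_inv_cancel_left₀ hl0.ne']

end StarShaped

theorem stmt10_general
    {X : Type*} [AddCommGroup X] [Module ℝ X]
    (Xp : Set X)
    {N : ℕ}
    (P : Set (Fin N → ℝ))
    (V₀ : (Fin N → ℝ) → ℝ)
    (V₁ : (Fin N → ℝ) → X)
    (A : Set X) (hAmono : ∀ a ∈ A, ∀ p ∈ Xp, a + p ∈ A)
    (hAstar : ∀ l : ℝ, 0 ≤ l → l ≤ 1 → ∀ a ∈ A, l • a ∈ A)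
    (hPstar : ∀ l : ℝ, 0 ≤ l → l ≤ 1 → ∀ x ∈ P, l • x ∈ P)
    (hV₀star : ∀ l : ℝ, 0 ≤ l → l ≤ 1 → ∀ x, V₀ (l • x) ≤ l * V₀ x)
    (hV₁anti : ∀ l : ℝ, 0 ≤ l → l ≤ 1 → ∀ x, V₁ (l • x) - l • V₁ x ∈ Xp) :
    ∀ l : ℝ, 1 ≤ l → ∀ Z : X,
      (l : EReal) * riskM A P V₀ V₁ Z ≤ riskM A P V₀ V₁ (l • Z) := by
  intro l hl Z
  refine le_sInf ?_
  rintro _ ⟨x, ⟨hxP, hxA⟩, rfl⟩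
  exact mul_riskM_le_of_mem hAmono hAstar hPstar hV₀star hV₁anti hl hxP hxA

theorem stmt10
    {X : Type*} [AddCommGroup X] [Module ℝ X] [TopologicalSpace X]
    [IsTopologicalAddGroup X] [ContinuousSMul ℝ X]
    (Xp : Set X) (hXp_cone : ∀ c : ℝ, 0 ≤ c → ∀ z ∈ Xp, c • z ∈ Xp)
    (hXp_conv : Convex ℝ Xp)
    {N : ℕ} (hN : 1 ≤ N)
    (P : Set (Fin N → ℝ)) (hP0 : (0 : Fin N → ℝ) ∈ P)
    (V₀ : (Fin N → ℝ) → ℝ) (hV₀0 : V₀ 0 = 0) (hV₀sp : ∀ x, -V₀ (-x) ≤ V₀ x)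
    (V₁ : (Fin N → ℝ) → X) (hV₁0 : V₁ 0 = 0) (hV₁sp : ∀ x, -V₁ (-x) - V₁ x ∈ Xp)
    (A : Set X) (hA0 : (0 : X) ∈ A) (hAmono : ∀ a ∈ A, ∀ p ∈ Xp, a + p ∈ A)
    (hAstar : ∀ l : ℝ, 0 ≤ l → l ≤ 1 → ∀ a ∈ A, l • a ∈ A)
    (hPstar : ∀ l : ℝ, 0 ≤ l → l ≤ 1 → ∀ x ∈ P, l • x ∈ P)
    (hV₀star : ∀ l : ℝ, 0 ≤ l → l ≤ 1 → ∀ x, V₀ (l • x) ≤ l * V₀ x)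
    (hV₁anti : ∀ l : ℝ, 0 ≤ l → l ≤ 1 → ∀ x, V₁ (l • x) - l • V₁ x ∈ Xp) :
    ∀ l : ℝ, 1 ≤ l → ∀ Z : X,
      (l : EReal) * riskM A P V₀ V₁ Z ≤ riskM A P V₀ V₁ (l • Z) :=
  stmt10_general Xp P V₀ V₁ A hAmono hAstar hPstar hV₀star hV₁anti
end
end

section
/- If 𝒜 and 𝒫 are cones and V₀ and V₁ are positively homogeneous (f(λx) = λf(x) for all λ ≥ 0 and x), then ρ is positively homogeneous: ρ(λX) = λρ(X) for every λ > 0 and every X ∈ 𝒳 (in the extended reals). -/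
open Topology Filter Set Pointwise

noncomputable section

/-!
Multiplying a position by `l > 0` multiplies each admissible hedge by `l`: since `𝒫` and `𝒜` are
cones and `V₁` is positively homogeneous, `x ↦ l • x` is a bijection from the hedges of `Z` onto
the hedges of `l • Z`, and along it `V₀` is multiplied by `l`. Multiplication by a positive real
is an order automorphism of `EReal`, so it commutes with the infimum.
-/

namespace EReal

def mulLeftOrderIso {l : ℝ} (hl : 0 < l) : EReal ≃o EReal :=
  Equiv.toOrderIso
    { toFun := ((l : EReal) * ·)
      invFun := (((l⁻¹ : ℝ) : EReal) * ·)
      left_inv := fun y => by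
        simp only [← mul_assoc, ← coe_mul, inv_mul_cancel₀ hl.ne', coe_one, one_mul]
      right_inv := fun y => by
        simp only [← mul_assoc, ← coe_mul, mul_inv_cancel₀ hl.ne', coe_one, one_mul] }
    (fun _ _ h => mul_le_mul_of_nonneg_left h (by exact_mod_cast hl.le))
    (fun _ _ h => mul_le_mul_of_nonneg_left h (by exact_mod_cast (inv_pos.2 hl).le))

theorem coe_mul_sInf_of_pos {l : ℝ} (hl : 0 < l) (s : Set EReal) :
    (l : EReal) * sInf s = sInf (((l : EReal) * ·) '' s) :=
  ((mulLeftOrderIso hl).map_sInf s).trans sInf_image.symm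

end EReal

section Hedges

variable {E X : Type*} [AddCommGroup E] [Module ℝ E] [AddCommGroup X] [Module ℝ X]
  {P : Set E} {A : Set X} {V₁ : E → X}

def hedgeSet (A : Set X) (P : Set E) (V₁ : E → X) (Z : X) : Set E :=
  {x | x ∈ P ∧ Z + V₁ x ∈ A}

theorem smul_mem_hedgeSet (hPcone : ∀ c : ℝ, 0 ≤ c → ∀ x ∈ P, c • x ∈ P)
    (hAcone : ∀ c : ℝ, 0 ≤ c → ∀ a ∈ A, c • a ∈ A)
    (hV₁hom : ∀ c : ℝ, 0 ≤ c → ∀ x, V₁ (c • x) = c • V₁ x)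
    {c : ℝ} (hc : 0 ≤ c) {Z : X} {x : E} (hx : x ∈ hedgeSet A P V₁ Z) :
    c • x ∈ hedgeSet A P V₁ (c • Z) := by
  refine ⟨hPcone c hc x hx.1, ?_⟩
  rw [hV₁hom c hc x, ← smul_add]
  exact hAcone c hc _ hx.2

theorem hedgeSet_smul (hPcone : ∀ c : ℝ, 0 ≤ c → ∀ x ∈ P, c • x ∈ P)
    (hAcone : ∀ c : ℝ, 0 ≤ c → ∀ a ∈ A, c • a ∈ A)
    (hV₁hom : ∀ c : ℝ, 0 ≤ c → ∀ x, V₁ (c • x) = c • V₁ x)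
    {l : ℝ} (hl : 0 < l) (Z : X) :
    hedgeSet A P V₁ (l • Z) = l • hedgeSet A P V₁ Z := by
  ext x
  constructor
  · intro hx
    have hx' := smul_mem_hedgeSet hPcone hAcone hV₁hom (inv_nonneg.2 hl.le) hx
    rw [inv_smul_smul₀ hl.ne'] at hx'
    exact mem_smul_set.2 ⟨l⁻¹ • x, hx', smul_inv_smul₀ hl.ne' x⟩
  · rintro ⟨y, hy, rfl⟩
    exact smul_mem_hedgeSet hPcone hAcone hV₁hom hl.le hy

end Hedges

theorem stmt11_general
    {X : Type*} [AddCommGroup X] [Module ℝ X]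
    {N : ℕ}
    (P : Set (Fin N → ℝ))
    (V₀ : (Fin N → ℝ) → ℝ)
    (V₁ : (Fin N → ℝ) → X)
    (A : Set X)
    (hAcone : ∀ c : ℝ, 0 ≤ c → ∀ a ∈ A, c • a ∈ A)
    (hPcone : ∀ c : ℝ, 0 ≤ c → ∀ x ∈ P, c • x ∈ P)
    (hV₀hom : ∀ c : ℝ, 0 ≤ c → ∀ x, V₀ (c • x) = c * V₀ x)
    (hV₁hom : ∀ c : ℝ, 0 ≤ c → ∀ x, V₁ (c • x) = c • V₁ x) :
    ∀ l : ℝ, 0 < l → ∀ Z : X,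
      riskM A P V₀ V₁ (l • Z) = (l : EReal) * riskM A P V₀ V₁ Z := by
  intro l hl Z
  change sInf (_ '' hedgeSet A P V₁ (l • Z)) = _ * sInf (_ '' hedgeSet A P V₁ Z)
  rw [hedgeSet_smul hPcone hAcone hV₁hom hl, EReal.coe_mul_sInf_of_pos hl, ← image_smul,
    image_image, image_image]
  simp only [hV₀hom l hl.le, EReal.coe_mul]

theorem stmt11
    {X : Type*} [AddCommGroup X] [Module ℝ X] [TopologicalSpace X]
    [IsTopologicalAddGroup X] [ContinuousSMul ℝ X]
    (Xp : Set X) (hXp_cone : ∀ c : ℝ, 0 ≤ c → ∀ z ∈ Xp, c • z ∈ Xp)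
    (hXp_conv : Convex ℝ Xp)
    {N : ℕ} (hN : 1 ≤ N)
    (P : Set (Fin N → ℝ)) (hP0 : (0 : Fin N → ℝ) ∈ P)
    (V₀ : (Fin N → ℝ) → ℝ) (hV₀0 : V₀ 0 = 0) (hV₀sp : ∀ x, -V₀ (-x) ≤ V₀ x)
    (V₁ : (Fin N → ℝ) → X) (hV₁0 : V₁ 0 = 0) (hV₁sp : ∀ x, -V₁ (-x) - V₁ x ∈ Xp)
    (A : Set X) (hA0 : (0 : X) ∈ A) (hAmono : ∀ a ∈ A, ∀ p ∈ Xp, a + p ∈ A)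
    (hAcone : ∀ c : ℝ, 0 ≤ c → ∀ a ∈ A, c • a ∈ A)
    (hPcone : ∀ c : ℝ, 0 ≤ c → ∀ x ∈ P, c • x ∈ P)
    (hV₀hom : ∀ c : ℝ, 0 ≤ c → ∀ x, V₀ (c • x) = c * V₀ x)
    (hV₁hom : ∀ c : ℝ, 0 ≤ c → ∀ x, V₁ (c • x) = c • V₁ x) :
    ∀ l : ℝ, 0 < l → ∀ Z : X,
      riskM A P V₀ V₁ (l • Z) = (l : EReal) * riskM A P V₀ V₁ Z :=
  stmt11_general P V₀ V₁ A hAcone hPcone hV₀hom hV₁hom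
end
end

section
/- If 𝒜 and 𝒫 are convex, V₀ is quasiconvex (V₀(λx + (1−λ)y) ≤ max{V₀(x), V₀(y)} for all λ ∈ [0,1] and x, y), and V₁ is concave (V₁(λx + (1−λ)y) ≥ λV₁(x) + (1−λ)V₁(y) for all λ ∈ [0,1] and x, y), then ρ is quasiconvex: ρ(λX + (1−λ)Y) ≤ max{ρ(X), ρ(Y)} for all λ ∈ [0,1] and all X, Y ∈ 𝒳. -/
open Topology Filter Set Pointwise

noncomputable section

/-! A portfolio feasible for `Z` and one feasible for `W` combine into a portfolio feasible for
the mixture `l • Z + (1 - l) • W` whose price is at most the larger of the two prices, so the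
infimum defining `ρ` at the mixture lies below the larger of the two infima. -/

theorem sInf_image_le_max_sInf_image {α β : Type*} [CompleteLinearOrder β] {f : α → β}
    {S T U : Set α} (h : ∀ x ∈ S, ∀ y ∈ T, ∃ z ∈ U, f z ≤ max (f x) (f y)) :
    sInf (f '' U) ≤ max (sInf (f '' S)) (sInf (f '' T)) := by
  refine le_of_forall_gt fun c hc => ?_
  obtain ⟨_, ⟨x, hx, rfl⟩, hxc⟩ := sInf_lt_iff.1 (lt_of_le_of_lt (le_max_left _ _) hc)
  obtain ⟨_, ⟨y, hy, rfl⟩, hyc⟩ := sInf_lt_iff.1 (lt_of_le_of_lt (le_max_right _ _) hc)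
  obtain ⟨z, hz, hzxy⟩ := h x hx y hy
  calc sInf (f '' U) ≤ f z := sInf_le ⟨z, hz, rfl⟩
    _ ≤ max (f x) (f y) := hzxy
    _ < c := max_lt hxc hyc

theorem convexComb_add_mem_of_concave {E X : Type*} [AddCommGroup E] [Module ℝ E]
    [AddCommGroup X] [Module ℝ X] {Xp A : Set X} {V₁ : E → X} {l : ℝ} {x y : E} {Z W : X}
    (hAmono : ∀ a ∈ A, ∀ p ∈ Xp, a + p ∈ A) (hAconv : Convex ℝ A)
    (hV₁conc : V₁ (l • x + (1 - l) • y) - (l • V₁ x + (1 - l) • V₁ y) ∈ Xp)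
    (hl0 : 0 ≤ l) (hl1 : l ≤ 1) (hx : Z + V₁ x ∈ A) (hy : W + V₁ y ∈ A) :
    l • Z + (1 - l) • W + V₁ (l • x + (1 - l) • y) ∈ A := by
  have hmix := hAconv hx hy hl0 (sub_nonneg.2 hl1) (add_sub_cancel l 1)
  convert hAmono _ hmix _ hV₁conc using 1
  simp only [smul_add]
  abel

theorem stmt12_general
    {X : Type*} [AddCommGroup X] [Module ℝ X]
    (Xp : Set X)
    {N : ℕ}
    (P : Set (Fin N → ℝ))
    (V₀ : (Fin N → ℝ) → ℝ)
    (V₁ : (Fin N → ℝ) → X)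
    (A : Set X) (hAmono : ∀ a ∈ A, ∀ p ∈ Xp, a + p ∈ A)
    (hAconv : Convex ℝ A) (hPconv : Convex ℝ P)
    (hV₀qconv : ∀ l : ℝ, 0 ≤ l → l ≤ 1 → ∀ x y,
      V₀ (l • x + (1 - l) • y) ≤ max (V₀ x) (V₀ y))
    (hV₁conc : ∀ l : ℝ, 0 ≤ l → l ≤ 1 → ∀ x y,
      V₁ (l • x + (1 - l) • y) - (l • V₁ x + (1 - l) • V₁ y) ∈ Xp) :
    ∀ l : ℝ, 0 ≤ l → l ≤ 1 → ∀ Z W : X,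
      riskM A P V₀ V₁ (l • Z + (1 - l) • W) ≤
        max (riskM A P V₀ V₁ Z) (riskM A P V₀ V₁ W) := by
  intro l hl0 hl1 Z W
  refine sInf_image_le_max_sInf_image ?_
  rintro x ⟨hxP, hxA⟩ y ⟨hyP, hyA⟩
  refine ⟨l • x + (1 - l) • y, ⟨hPconv hxP hyP hl0 (sub_nonneg.2 hl1) (add_sub_cancel l 1),
    convexComb_add_mem_of_concave hAmono hAconv (hV₁conc l hl0 hl1 x y) hl0 hl1 hxA hyA⟩, ?_⟩
  exact EReal.coe_strictMono.monotone.map_max ▸ EReal.coe_le_coe_iff.2 (hV₀qconv l hl0 hl1 x y)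

theorem stmt12
    {X : Type*} [AddCommGroup X] [Module ℝ X] [TopologicalSpace X]
    [IsTopologicalAddGroup X] [ContinuousSMul ℝ X]
    (Xp : Set X) (hXp_cone : ∀ c : ℝ, 0 ≤ c → ∀ z ∈ Xp, c • z ∈ Xp)
    (hXp_conv : Convex ℝ Xp)
    {N : ℕ} (hN : 1 ≤ N)
    (P : Set (Fin N → ℝ)) (hP0 : (0 : Fin N → ℝ) ∈ P)
    (V₀ : (Fin N → ℝ) → ℝ) (hV₀0 : V₀ 0 = 0) (hV₀sp : ∀ x, -V₀ (-x) ≤ V₀ x)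
    (V₁ : (Fin N → ℝ) → X) (hV₁0 : V₁ 0 = 0) (hV₁sp : ∀ x, -V₁ (-x) - V₁ x ∈ Xp)
    (A : Set X) (hA0 : (0 : X) ∈ A) (hAmono : ∀ a ∈ A, ∀ p ∈ Xp, a + p ∈ A)
    (hAconv : Convex ℝ A) (hPconv : Convex ℝ P)
    (hV₀qconv : ∀ l : ℝ, 0 ≤ l → l ≤ 1 → ∀ x y,
      V₀ (l • x + (1 - l) • y) ≤ max (V₀ x) (V₀ y))
    (hV₁conc : ∀ l : ℝ, 0 ≤ l → l ≤ 1 → ∀ x y,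
      V₁ (l • x + (1 - l) • y) - (l • V₁ x + (1 - l) • V₁ y) ∈ Xp) :
    ∀ l : ℝ, 0 ≤ l → l ≤ 1 → ∀ Z W : X,
      riskM A P V₀ V₁ (l • Z + (1 - l) • W) ≤
        max (riskM A P V₀ V₁ Z) (riskM A P V₀ V₁ W) :=
  stmt12_general Xp P V₀ V₁ A hAmono hAconv hPconv hV₀qconv hV₁conc
end
end

section
/- If 𝒜 and 𝒫 are closed under addition, V₀ is subadditive (V₀(x+y) ≤ V₀(x) + V₀(y) for all x, y), and V₁ is superadditive (V₁(x+y) ≥ V₁(x) + V₁(y) for all x, y), then ρ is subadditive: for all X, Y ∈ 𝒳 such that {ρ(X), ρ(Y)} ≠ {−∞, +∞}, one has ρ(X + Y) ≤ ρ(X) + ρ(Y) in the extended reals. -/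
open Topology Filter Set Pointwise

noncomputable section

/-! If `x` hedges `Z` and `y` hedges `W`, then `x + y` is an admissible portfolio hedging `Z + W`
at cost at most `V₀ x + V₀ y`: closedness of `𝒜` under addition and monotonicity absorb the
superadditivity gap `V₁ (x + y) - (V₁ x + V₁ y) ≥ 0`. Taking infima gives subadditivity of `ρ`,
provided the sum `ρ Z + ρ W` is not of the form `⊥ + ⊤`. -/

theorem EReal.sInf_le_sInf_add_sInf {s t u : Set EReal}
    (h₁ : sInf s ≠ ⊥ ∨ sInf t ≠ ⊤) (h₂ : sInf s ≠ ⊤ ∨ sInf t ≠ ⊥)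
    (h : ∀ a ∈ s, ∀ b ∈ t, ∃ c ∈ u, c ≤ a + b) : sInf u ≤ sInf s + sInf t := by
  refine EReal.le_add_of_forall_gt h₁ h₂ fun a' ha' b' hb' => ?_
  obtain ⟨a, ha, haa'⟩ := sInf_lt_iff.mp ha'
  obtain ⟨b, hb, hbb'⟩ := sInf_lt_iff.mp hb'
  obtain ⟨c, hc, hcab⟩ := h a ha b hb
  calc sInf u ≤ c := sInf_le hc
    _ ≤ a + b := hcab
    _ ≤ a' + b' := add_le_add haa'.le hbb'.le

theorem add_mem_hedges {X : Type*} [AddCommGroup X] {N : ℕ} {Xp A : Set X}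
    {P : Set (Fin N → ℝ)} {V₁ : (Fin N → ℝ) → X}
    (hAmono : ∀ a ∈ A, ∀ p ∈ Xp, a + p ∈ A) (hAadd : ∀ a ∈ A, ∀ b ∈ A, a + b ∈ A)
    (hPadd : ∀ x ∈ P, ∀ y ∈ P, x + y ∈ P)
    (hV₁super : ∀ x y, V₁ (x + y) - (V₁ x + V₁ y) ∈ Xp)
    {Z W : X} {x y : Fin N → ℝ} (hx : x ∈ P ∧ Z + V₁ x ∈ A) (hy : y ∈ P ∧ W + V₁ y ∈ A) :
    x + y ∈ P ∧ Z + W + V₁ (x + y) ∈ A := by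
  refine ⟨hPadd x hx.1 y hy.1, ?_⟩
  have h := hAmono _ (hAadd _ hx.2 _ hy.2) _ (hV₁super x y)
  rwa [show Z + V₁ x + (W + V₁ y) + (V₁ (x + y) - (V₁ x + V₁ y)) = Z + W + V₁ (x + y) by abel]
    at h

theorem stmt14_general
    {X : Type*} [AddCommGroup X]
    (Xp : Set X)
    {N : ℕ}
    (P : Set (Fin N → ℝ))
    (V₀ : (Fin N → ℝ) → ℝ)
    (V₁ : (Fin N → ℝ) → X)
    (A : Set X) (hAmono : ∀ a ∈ A, ∀ p ∈ Xp, a + p ∈ A)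
    (hAadd : ∀ a ∈ A, ∀ b ∈ A, a + b ∈ A)
    (hPadd : ∀ x ∈ P, ∀ y ∈ P, x + y ∈ P)
    (hV₀sub : ∀ x y, V₀ (x + y) ≤ V₀ x + V₀ y)
    (hV₁super : ∀ x y, V₁ (x + y) - (V₁ x + V₁ y) ∈ Xp) :
    ∀ Z W : X,
      ¬(riskM A P V₀ V₁ Z = ⊥ ∧ riskM A P V₀ V₁ W = ⊤) →
      ¬(riskM A P V₀ V₁ Z = ⊤ ∧ riskM A P V₀ V₁ W = ⊥) →
      riskM A P V₀ V₁ (Z + W) ≤ riskM A P V₀ V₁ Z + riskM A P V₀ V₁ W := by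
  intro Z W h₁ h₂
  refine EReal.sInf_le_sInf_add_sInf (not_and_or.mp h₁) (not_and_or.mp h₂) ?_
  rintro _ ⟨x, hx, rfl⟩ _ ⟨y, hy, rfl⟩
  refine ⟨_, ⟨x + y, add_mem_hedges hAmono hAadd hPadd hV₁super hx hy, rfl⟩, ?_⟩
  exact EReal.coe_le_coe_iff.mpr (hV₀sub x y)

theorem stmt14
    {X : Type*} [AddCommGroup X] [Module ℝ X] [TopologicalSpace X]
    [IsTopologicalAddGroup X] [ContinuousSMul ℝ X]
    (Xp : Set X) (hXp_cone : ∀ c : ℝ, 0 ≤ c → ∀ z ∈ Xp, c • z ∈ Xp)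
    (hXp_conv : Convex ℝ Xp)
    {N : ℕ} (hN : 1 ≤ N)
    (P : Set (Fin N → ℝ)) (hP0 : (0 : Fin N → ℝ) ∈ P)
    (V₀ : (Fin N → ℝ) → ℝ) (hV₀0 : V₀ 0 = 0) (hV₀sp : ∀ x, -V₀ (-x) ≤ V₀ x)
    (V₁ : (Fin N → ℝ) → X) (hV₁0 : V₁ 0 = 0) (hV₁sp : ∀ x, -V₁ (-x) - V₁ x ∈ Xp)
    (A : Set X) (hA0 : (0 : X) ∈ A) (hAmono : ∀ a ∈ A, ∀ p ∈ Xp, a + p ∈ A)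
    (hAadd : ∀ a ∈ A, ∀ b ∈ A, a + b ∈ A)
    (hPadd : ∀ x ∈ P, ∀ y ∈ P, x + y ∈ P)
    (hV₀sub : ∀ x y, V₀ (x + y) ≤ V₀ x + V₀ y)
    (hV₁super : ∀ x y, V₁ (x + y) - (V₁ x + V₁ y) ∈ Xp) :
    ∀ Z W : X,
      ¬(riskM A P V₀ V₁ Z = ⊥ ∧ riskM A P V₀ V₁ W = ⊤) →
      ¬(riskM A P V₀ V₁ Z = ⊤ ∧ riskM A P V₀ V₁ W = ⊥) →
      riskM A P V₀ V₁ (Z + W) ≤ riskM A P V₀ V₁ Z + riskM A P V₀ V₁ W :=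
  stmt14_general Xp P V₀ V₁ A hAmono hAadd hPadd hV₀sub hV₁super
end
end

section
/- Assume that 𝒫 is convex, V₀ is convex, and V₁ is concave (V₁(λx + (1−λ)y) ≥ λV₁(x) + (1−λ)V₁(y) for all λ ∈ [0,1] and x, y). For each Y ∈ 𝒜 define 𝒜_Y = {Z ∈ 𝒳 : Z ≥ Y} and ρ_Y(X) = inf{V₀(x) : x ∈ 𝒫, X + V₁(x) ∈ 𝒜_Y} (inf ∅ = +∞). Then each ρ_Y is convex (for all λ ∈ (0,1) and X, X' with {ρ_Y(X), ρ_Y(X')} ≠ {−∞, +∞}, ρ_Y(λX + (1−λ)X') ≤ λρ_Y(X) + (1−λ)ρ_Y(X')), and for every X ∈ 𝒳 one has ρ(X) = inf over Y ∈ 𝒜 of ρ_Y(X). -/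
/-!
If `x` hedges `Z` and `y` hedges `W` at level `Y` (i.e. `Z + V₁ x ≥ Y`, `W + V₁ y ≥ Y`), then
`l • x + (1 - l) • y` hedges `l • Z + (1 - l) • W`, because `𝒳₊` is a convex cone and `V₁` is
concave; convexity of `V₀` bounds its price by `l V₀ x + (1 - l) V₀ y`. Taking infima over `x`
and `y` in `EReal` is legitimate exactly when the right-hand side is not of the form `⊥ + ⊤`.
The representation `ρ = ⨅ Y ∈ 𝒜, ρ_Y` holds because `𝒜` is the union of the sets `𝒜_Y`,
`Y ∈ 𝒜`: it is upward closed, and `0 ∈ 𝒳₊` makes `X + V₁ x ∈ 𝒜_{X + V₁ x}`.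
-/

open Topology Filter Set Pointwise

noncomputable section

/-- The convex risk measure `ρ_Y` associated with the acceptance set `𝒜_Y = {Z : Z ≥ Y}`. -/
def riskMY {X : Type*} [AddCommGroup X] {N : ℕ} (Xp : Set X) (P : Set (Fin N → ℝ))
    (V₀ : (Fin N → ℝ) → ℝ) (V₁ : (Fin N → ℝ) → X) (Y : X) (Z : X) : EReal :=
  sInf ((fun x => ((V₀ x : ℝ) : EReal)) '' {x | x ∈ P ∧ (Z + V₁ x) - Y ∈ Xp})

namespace EReal

theorem coe_mul_eq_bot_iff_of_pos {l : ℝ} (hl : 0 < l) {x : EReal} :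
    (l : EReal) * x = ⊥ ↔ x = ⊥ := by
  simp [mul_eq_bot, hl, hl.le, not_lt.2]

theorem coe_mul_eq_top_iff_of_pos {l : ℝ} (hl : 0 < l) {x : EReal} :
    (l : EReal) * x = ⊤ ↔ x = ⊤ := by
  simp [mul_eq_top, hl, hl.le, not_lt.2]

theorem exists_coe_mul_lt_of_coe_mul_sInf_lt {s : Set EReal} {l : ℝ} (hl : 0 < l)
    {r : EReal} (h : l * sInf s < r) : ∃ a ∈ s, l * a < r := by
  have hl' : (0 : EReal) < l := EReal.coe_pos.2 hl
  rw [mul_comm, ← lt_div_iff hl' (coe_ne_top l), sInf_lt_iff] at h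
  obtain ⟨a, has, ha⟩ := h
  exact ⟨a, has, by rwa [mul_comm, ← lt_div_iff hl' (coe_ne_top l)]⟩

theorem le_coe_mul_sInf_add_coe_mul_sInf {s t : Set EReal} {c : EReal} {l m : ℝ}
    (hl : 0 < l) (hm : 0 < m) (h₁ : ¬(sInf s = ⊥ ∧ sInf t = ⊤))
    (h₂ : ¬(sInf s = ⊤ ∧ sInf t = ⊥)) (h : ∀ a ∈ s, ∀ b ∈ t, c ≤ l * a + m * b) :
    c ≤ l * sInf s + m * sInf t := by
  rw [← coe_mul_eq_bot_iff_of_pos hl, ← coe_mul_eq_top_iff_of_pos hm, not_and_or] at h₁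
  rw [← coe_mul_eq_top_iff_of_pos hl, ← coe_mul_eq_bot_iff_of_pos hm, not_and_or] at h₂
  refine le_add_of_forall_gt h₁ h₂ fun a' ha' b' hb' => ?_
  obtain ⟨a, has, ha⟩ := exists_coe_mul_lt_of_coe_mul_sInf_lt hl ha'
  obtain ⟨b, hbt, hb⟩ := exists_coe_mul_lt_of_coe_mul_sInf_lt hm hb'
  exact (h a has b hbt).trans (add_le_add ha.le hb.le)

end EReal

section ConvexCone

variable {E : Type*} [AddCommGroup E] [Module ℝ E] {K : Set E}

theorem add_mem_of_convex_of_smul_mem (hK_smul : ∀ c : ℝ, 0 ≤ c → ∀ z ∈ K, c • z ∈ K)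
    (hK : Convex ℝ K) {p q : E} (hp : p ∈ K) (hq : q ∈ K) : p + q ∈ K := by
  have hmid : (1 / 2 : ℝ) • p + (1 / 2 : ℝ) • q ∈ K :=
    hK hp hq (by norm_num) (by norm_num) (by norm_num)
  convert hK_smul 2 zero_le_two _ hmid using 1
  module

end ConvexCone

section RiskMeasure

variable {X : Type*} [AddCommGroup X] {Xp : Set X} {N : ℕ}
  {P : Set (Fin N → ℝ)} {V₀ : (Fin N → ℝ) → ℝ} {V₁ : (Fin N → ℝ) → X}

theorem riskMY_le {Y Z : X} {x : Fin N → ℝ} (hxP : x ∈ P) (hx : Z + V₁ x - Y ∈ Xp) :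
    riskMY Xp P V₀ V₁ Y Z ≤ V₀ x :=
  sInf_le ⟨x, ⟨hxP, hx⟩, rfl⟩

theorem riskM_eq_iInf_riskMY {A : Set X} (hXp0 : (0 : X) ∈ Xp)
    (hAmono : ∀ a ∈ A, ∀ p ∈ Xp, a + p ∈ A) (Z : X) :
    riskM A P V₀ V₁ Z = ⨅ Y ∈ A, riskMY Xp P V₀ V₁ Y Z := by
  refine le_antisymm (le_iInf₂ fun Y hY => sInf_le_sInf (image_mono ?_)) (le_sInf ?_)
  · rintro x ⟨hxP, hx⟩
    exact ⟨hxP, by simpa using hAmono Y hY _ hx⟩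
  · rintro _ ⟨x, ⟨hxP, hxA⟩, rfl⟩
    exact (iInf₂_le _ hxA).trans (riskMY_le hxP (by simpa using hXp0))

variable [Module ℝ X]

theorem smul_add_smul_sub_mem_of_concave (hXp_cone : ∀ c : ℝ, 0 ≤ c → ∀ z ∈ Xp, c • z ∈ Xp)
    (hXp_conv : Convex ℝ Xp)
    (hV₁conc : ∀ l : ℝ, 0 ≤ l → l ≤ 1 → ∀ x y,
      V₁ (l • x + (1 - l) • y) - (l • V₁ x + (1 - l) • V₁ y) ∈ Xp)
    {l : ℝ} (hl₀ : 0 ≤ l) (hl₁ : l ≤ 1) {Y Z W : X} {x y : Fin N → ℝ}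
    (hx : Z + V₁ x - Y ∈ Xp) (hy : W + V₁ y - Y ∈ Xp) :
    l • Z + (1 - l) • W + V₁ (l • x + (1 - l) • y) - Y ∈ Xp := by
  -- the left side is `l • (Z + V₁ x - Y) + (1 - l) • (W + V₁ y - Y)` plus the concavity defect
  convert add_mem_of_convex_of_smul_mem hXp_cone hXp_conv
    (hXp_conv hx hy hl₀ (sub_nonneg.2 hl₁) (add_sub_cancel l 1)) (hV₁conc l hl₀ hl₁ x y) using 1
  module

theorem riskMY_smul_add_smul_le (hXp_cone : ∀ c : ℝ, 0 ≤ c → ∀ z ∈ Xp, c • z ∈ Xp)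
    (hXp_conv : Convex ℝ Xp) (hPconv : Convex ℝ P) (hV₀conv : ConvexOn ℝ Set.univ V₀)
    (hV₁conc : ∀ l : ℝ, 0 ≤ l → l ≤ 1 → ∀ x y,
      V₁ (l • x + (1 - l) • y) - (l • V₁ x + (1 - l) • V₁ y) ∈ Xp)
    (Y : X) {l : ℝ} (hl₀ : 0 < l) (hl₁ : l < 1) {Z W : X}
    (h₁ : ¬(riskMY Xp P V₀ V₁ Y Z = ⊥ ∧ riskMY Xp P V₀ V₁ Y W = ⊤))
    (h₂ : ¬(riskMY Xp P V₀ V₁ Y Z = ⊤ ∧ riskMY Xp P V₀ V₁ Y W = ⊥)) :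
    riskMY Xp P V₀ V₁ Y (l • Z + (1 - l) • W) ≤
      (l : EReal) * riskMY Xp P V₀ V₁ Y Z + ((1 - l : ℝ) : EReal) * riskMY Xp P V₀ V₁ Y W := by
  refine EReal.le_coe_mul_sInf_add_coe_mul_sInf hl₀ (sub_pos.2 hl₁) h₁ h₂ ?_
  rintro _ ⟨x, ⟨hxP, hx⟩, rfl⟩ _ ⟨y, ⟨hyP, hy⟩, rfl⟩
  calc riskMY Xp P V₀ V₁ Y (l • Z + (1 - l) • W)
      ≤ V₀ (l • x + (1 - l) • y) :=
        riskMY_le (hPconv hxP hyP hl₀.le (sub_nonneg.2 hl₁.le) (add_sub_cancel l 1))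
          (smul_add_smul_sub_mem_of_concave hXp_cone hXp_conv hV₁conc hl₀.le hl₁.le hx hy)
    _ ≤ ((l * V₀ x + (1 - l) * V₀ y : ℝ) : EReal) := EReal.coe_le_coe_iff.2 <|
        hV₀conv.2 (mem_univ x) (mem_univ y) hl₀.le (sub_nonneg.2 hl₁.le) (add_sub_cancel l 1)
    _ = l * V₀ x + ((1 - l : ℝ) : EReal) * V₀ y := by push_cast; rfl

end RiskMeasure

theorem stmt15_general
    {X : Type*} [AddCommGroup X] [Module ℝ X]
    (Xp : Set X) (hXp_cone : ∀ c : ℝ, 0 ≤ c → ∀ z ∈ Xp, c • z ∈ Xp)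
    (hXp_conv : Convex ℝ Xp)
    {N : ℕ}
    (P : Set (Fin N → ℝ))
    (V₀ : (Fin N → ℝ) → ℝ)
    (V₁ : (Fin N → ℝ) → X)
    (A : Set X) (hAmono : ∀ a ∈ A, ∀ p ∈ Xp, a + p ∈ A)
    (hPconv : Convex ℝ P)
    (hV₀conv : ConvexOn ℝ Set.univ V₀)
    (hV₁conc : ∀ l : ℝ, 0 ≤ l → l ≤ 1 → ∀ x y,
      V₁ (l • x + (1 - l) • y) - (l • V₁ x + (1 - l) • V₁ y) ∈ Xp) :
    (∀ Y ∈ A, ∀ l : ℝ, 0 < l → l < 1 → ∀ Z W : X,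
      ¬(riskMY Xp P V₀ V₁ Y Z = ⊥ ∧ riskMY Xp P V₀ V₁ Y W = ⊤) →
      ¬(riskMY Xp P V₀ V₁ Y Z = ⊤ ∧ riskMY Xp P V₀ V₁ Y W = ⊥) →
      riskMY Xp P V₀ V₁ Y (l • Z + (1 - l) • W) ≤
        (l : EReal) * riskMY Xp P V₀ V₁ Y Z +
          ((1 - l : ℝ) : EReal) * riskMY Xp P V₀ V₁ Y W) ∧
    ∀ Z : X, riskM A P V₀ V₁ Z = ⨅ Y ∈ A, riskMY Xp P V₀ V₁ Y Z := by
  have hXp0 : (0 : X) ∈ Xp := by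
    simpa using hXp_cone 0 le_rfl _ (hV₁conc 0 le_rfl zero_le_one 0 0)
  exact ⟨fun Y _ l hl₀ hl₁ Z W h₁ h₂ => riskMY_smul_add_smul_le hXp_cone hXp_conv hPconv hV₀conv
      hV₁conc Y hl₀ hl₁ h₁ h₂,
    riskM_eq_iInf_riskMY hXp0 hAmono⟩

theorem stmt15
    {X : Type*} [AddCommGroup X] [Module ℝ X] [TopologicalSpace X]
    [IsTopologicalAddGroup X] [ContinuousSMul ℝ X]
    (Xp : Set X) (hXp_cone : ∀ c : ℝ, 0 ≤ c → ∀ z ∈ Xp, c • z ∈ Xp)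
    (hXp_conv : Convex ℝ Xp)
    {N : ℕ} (hN : 1 ≤ N)
    (P : Set (Fin N → ℝ)) (hP0 : (0 : Fin N → ℝ) ∈ P)
    (V₀ : (Fin N → ℝ) → ℝ) (hV₀0 : V₀ 0 = 0) (hV₀sp : ∀ x, -V₀ (-x) ≤ V₀ x)
    (V₁ : (Fin N → ℝ) → X) (hV₁0 : V₁ 0 = 0) (hV₁sp : ∀ x, -V₁ (-x) - V₁ x ∈ Xp)
    (A : Set X) (hA0 : (0 : X) ∈ A) (hAmono : ∀ a ∈ A, ∀ p ∈ Xp, a + p ∈ A)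
    (hPconv : Convex ℝ P)
    (hV₀conv : ConvexOn ℝ Set.univ V₀)
    (hV₁conc : ∀ l : ℝ, 0 ≤ l → l ≤ 1 → ∀ x y,
      V₁ (l • x + (1 - l) • y) - (l • V₁ x + (1 - l) • V₁ y) ∈ Xp) :
    (∀ Y ∈ A, ∀ l : ℝ, 0 < l → l < 1 → ∀ Z W : X,
      ¬(riskMY Xp P V₀ V₁ Y Z = ⊥ ∧ riskMY Xp P V₀ V₁ Y W = ⊤) →
      ¬(riskMY Xp P V₀ V₁ Y Z = ⊤ ∧ riskMY Xp P V₀ V₁ Y W = ⊥) →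
      riskMY Xp P V₀ V₁ Y (l • Z + (1 - l) • W) ≤
        (l : EReal) * riskMY Xp P V₀ V₁ Y Z +
          ((1 - l : ℝ) : EReal) * riskMY Xp P V₀ V₁ Y W) ∧
    ∀ Z : X, riskM A P V₀ V₁ Z = ⨅ Y ∈ A, riskMY Xp P V₀ V₁ Y Z :=
  stmt15_general Xp hXp_cone hXp_conv P V₀ V₁ A hAmono hPconv hV₀conv hV₁conc
end
end

section
/- Let z ∈ 𝒫 be such that 𝒫 + span({z}) ⊆ 𝒫, and suppose V₀ and V₁ are additive along z, i.e. V₀(x + λz) = V₀(x) + λV₀(z) and V₁(x + λz) = V₁(x) + λV₁(z) for every x ∈ 𝒫 and λ ∈ ℝ. Then ρ is price additive along z: ρ(X + λV₁(z)) = ρ(X) − λV₀(z) for every X ∈ 𝒳 and λ ∈ ℝ (in the extended reals, where subtracting a real number from ±∞ gives ±∞). -/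
open Topology Filter Set Pointwise

noncomputable section

/-!
Translation by `t • z` maps `P` onto itself and, by additivity of `V₁` along `z`, carries the
portfolios that make `Z + t • V₁ z` acceptable onto those that make `Z` acceptable, raising each
price by `t * V₀ z`. Since subtracting a real number is an order automorphism of `EReal`, it
commutes with `sInf`, including at `±∞`.
-/

def EReal.subCoeOrderIso (c : ℝ) : EReal ≃o EReal :=
  Equiv.toOrderIso
    { toFun := (· - c), invFun := (· + c)
      left_inv := fun _ => EReal.sub_add_cancel
      right_inv := fun _ => EReal.add_sub_cancel_right }
    (fun _ _ h => EReal.sub_le_sub h le_rfl) (fun _ _ h => add_le_add_left h _)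

theorem EReal.sInf_image_sub_coe (S : Set EReal) (c : ℝ) :
    sInf ((· - (c : EReal)) '' S) = sInf S - c :=
  (map_sInf (EReal.subCoeOrderIso c) S).symm

section PriceAdditivity

variable {E X : Type*} [AddCommGroup E] [Module ℝ E] [AddCommGroup X] [Module ℝ X]
  {A : Set X} {P : Set E} {V₁ : E → X} {z : E}

theorem add_smul_mem_of_add_span_subset
    (hPz : P + (Submodule.span ℝ {z} : Set E) ⊆ P)
    {x : E} (hx : x ∈ P) (t : ℝ) : x + t • z ∈ P :=
  hPz (add_mem_add hx (Submodule.smul_mem _ t (Submodule.mem_span_singleton_self z)))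

theorem acceptable_add_smul_eq_image
    (hPz : P + (Submodule.span ℝ {z} : Set E) ⊆ P)
    (hV₁add : ∀ x ∈ P, ∀ t : ℝ, V₁ (x + t • z) = V₁ x + t • V₁ z) (Z : X) (t : ℝ) :
    {x | x ∈ P ∧ Z + t • V₁ z + V₁ x ∈ A} =
      (· + (-t) • z) '' {x | x ∈ P ∧ Z + V₁ x ∈ A} := by
  ext y
  constructor
  · rintro ⟨hyP, hyA⟩
    refine ⟨y + t • z, ⟨add_smul_mem_of_add_span_subset hPz hyP t, ?_⟩, by simp⟩
    rwa [hV₁add y hyP t, ← add_assoc, add_right_comm]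
  · rintro ⟨x, ⟨hxP, hxA⟩, rfl⟩
    refine ⟨add_smul_mem_of_add_span_subset hPz hxP (-t), ?_⟩
    rwa [hV₁add x hxP (-t), neg_smul, add_add_add_comm, add_neg_cancel, add_zero]

end PriceAdditivity

theorem stmt16_general
    {X : Type*} [AddCommGroup X] [Module ℝ X] {N : ℕ} (P : Set (Fin N → ℝ))
    (V₀ : (Fin N → ℝ) → ℝ) (V₁ : (Fin N → ℝ) → X) (A : Set X) (z : Fin N → ℝ)
    (hPz : P + ((Submodule.span ℝ {z} : Submodule ℝ (Fin N → ℝ)) : Set (Fin N → ℝ)) ⊆ P)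
    (hV₀add : ∀ x ∈ P, ∀ t : ℝ, V₀ (x + t • z) = V₀ x + t * V₀ z)
    (hV₁add : ∀ x ∈ P, ∀ t : ℝ, V₁ (x + t • z) = V₁ x + t • V₁ z) :
    ∀ Z : X, ∀ t : ℝ,
      riskM A P V₀ V₁ (Z + t • V₁ z) = riskM A P V₀ V₁ Z - ((t * V₀ z : ℝ) : EReal) := by
  intro Z t
  rw [riskM, riskM, acceptable_add_smul_eq_image hPz hV₁add, image_image,
    ← EReal.sInf_image_sub_coe, image_image]
  refine congrArg sInf (image_congr fun x ⟨hxP, _⟩ => ?_)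
  rw [hV₀add x hxP (-t), neg_mul, ← sub_eq_add_neg, EReal.coe_sub]

theorem stmt16
    {X : Type*} [AddCommGroup X] [Module ℝ X] [TopologicalSpace X]
    [IsTopologicalAddGroup X] [ContinuousSMul ℝ X]
    (Xp : Set X) (hXp_cone : ∀ c : ℝ, 0 ≤ c → ∀ z ∈ Xp, c • z ∈ Xp)
    (hXp_conv : Convex ℝ Xp)
    {N : ℕ} (hN : 1 ≤ N)
    (P : Set (Fin N → ℝ)) (hP0 : (0 : Fin N → ℝ) ∈ P)
    (V₀ : (Fin N → ℝ) → ℝ) (hV₀0 : V₀ 0 = 0) (hV₀sp : ∀ x, -V₀ (-x) ≤ V₀ x)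
    (V₁ : (Fin N → ℝ) → X) (hV₁0 : V₁ 0 = 0) (hV₁sp : ∀ x, -V₁ (-x) - V₁ x ∈ Xp)
    (A : Set X) (hA0 : (0 : X) ∈ A) (hAmono : ∀ a ∈ A, ∀ p ∈ Xp, a + p ∈ A)
    (z : Fin N → ℝ) (hz : z ∈ P)
    (hPz : P + ((Submodule.span ℝ {z} : Submodule ℝ (Fin N → ℝ)) : Set (Fin N → ℝ)) ⊆ P)
    (hV₀add : ∀ x ∈ P, ∀ t : ℝ, V₀ (x + t • z) = V₀ x + t * V₀ z)
    (hV₁add : ∀ x ∈ P, ∀ t : ℝ, V₁ (x + t • z) = V₁ x + t • V₁ z) :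
    ∀ Z : X, ∀ t : ℝ,
      riskM A P V₀ V₁ (Z + t • V₁ z) = riskM A P V₀ V₁ Z - ((t * V₀ z : ℝ) : EReal) :=
  stmt16_general P V₀ V₁ A z hPz hV₀add hV₁add
end
end

section
/- The following implications hold: (a) if ℒ = {0}, then there exists no scalable acceptable deal; (b) if V₁(x) = 0 implies x = 0 and there exists no scalable acceptable deal, then ℒ = {0}; (c) if 𝒜^∞ ∩ (−𝒜^∞) = {0} and ℒ is a linear subspace of ℝ^N, then there exists no scalable acceptable deal. -/
open Topology Filter Set Pointwise

noncomputable section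

theorem zero_mem_asymCone {E : Type*} [AddCommMonoid E] [SMulZeroClass ℝ E] [TopologicalSpace E]
    {C : Set E} (h : (0 : E) ∈ C) : (0 : E) ∈ asymCone C := fun U hU _ hε =>
  ⟨0, h, 0, le_rfl, hε, by simpa using mem_of_mem_nhds hU⟩

theorem add_mem_asymCone_of_cone {E : Type*} [AddCommGroup E] [Module ℝ E] [TopologicalSpace E]
    [ContinuousAdd E] {C K : Set E} (hK : ∀ c : ℝ, 0 ≤ c → ∀ z ∈ K, c • z ∈ K)
    (hC0 : (0 : E) ∈ C) (hCK : ∀ a ∈ C, ∀ p ∈ K, a + p ∈ C)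
    {a p : E} (ha : a ∈ asymCone C) (hp : p ∈ K) : a + p ∈ asymCone C := by
  intro U hU ε hε
  have hU' : (· + p) ⁻¹' U ∈ 𝓝 a :=
    (continuous_add_const p).continuousAt.preimage_mem_nhds hU
  obtain ⟨c, hc, l, hl0, hlε, hlc⟩ := ha _ hU' ε hε
  rcases hl0.eq_or_lt with rfl | hl
  · -- `p ∈ U`, and `p = (ε/2) • ((ε/2)⁻¹ • p)` with `(ε/2)⁻¹ • p ∈ 0 + K ⊆ C`
    have hpU : p ∈ U := by simpa using hlc
    have hε2 : 0 < ε / 2 := half_pos hε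
    refine ⟨(ε / 2)⁻¹ • p, by simpa using hCK 0 hC0 _ (hK _ (inv_nonneg.2 hε2.le) p hp),
      ε / 2, hε2.le, half_lt_self hε, ?_⟩
    rwa [smul_inv_smul₀ hε2.ne']
  · refine ⟨c + l⁻¹ • p, hCK c hc _ (hK _ (inv_nonneg.2 hl.le) p hp), l, hl.le, hlε, ?_⟩
    rwa [smul_add, smul_inv_smul₀ hl.ne']

theorem zero_mem_Lset {X : Type*} [AddCommMonoid X] [Module ℝ X] [TopologicalSpace X] {N : ℕ}
    {A : Set X} {P : Set (Fin N → ℝ)} {V₀ : (Fin N → ℝ) → ℝ} {V₁ : (Fin N → ℝ) → X}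
    (hP0 : (0 : Fin N → ℝ) ∈ P) (hV₀0 : V₀ 0 = 0) (hV₁0 : V₁ 0 = 0) (hA0 : (0 : X) ∈ A) :
    (0 : Fin N → ℝ) ∈ Lset A P V₀ V₁ :=
  ⟨zero_mem_asymCone hP0, zero_mem_asymCone (C := epigraph V₀) (by simp [epigraph, hV₀0]),
    hV₁0 ▸ zero_mem_asymCone hA0⟩

theorem stmt18_general
    {X : Type*} [AddCommGroup X] [Module ℝ X] [TopologicalSpace X]
    [IsTopologicalAddGroup X]
    (Xp : Set X) (hXp_cone : ∀ c : ℝ, 0 ≤ c → ∀ z ∈ Xp, c • z ∈ Xp)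
    {N : ℕ}
    (P : Set (Fin N → ℝ)) (hP0 : (0 : Fin N → ℝ) ∈ P)
    (V₀ : (Fin N → ℝ) → ℝ) (hV₀0 : V₀ 0 = 0)
    (V₁ : (Fin N → ℝ) → X) (hV₁0 : V₁ 0 = 0) (hV₁sp : ∀ x, -V₁ (-x) - V₁ x ∈ Xp)
    (A : Set X) (hA0 : (0 : X) ∈ A) (hAmono : ∀ a ∈ A, ∀ p ∈ Xp, a + p ∈ A) :
    (Lset A P V₀ V₁ = {0} → ¬∃ x, x ∈ Lset A P V₀ V₁ ∧ V₁ x ≠ 0) ∧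
    ((∀ x, V₁ x = 0 → x = 0) → (¬∃ x, x ∈ Lset A P V₀ V₁ ∧ V₁ x ≠ 0) →
      Lset A P V₀ V₁ = {0}) ∧
    (asymCone A ∩ (-(asymCone A)) = {0} →
      (∃ S : Submodule ℝ (Fin N → ℝ), (S : Set (Fin N → ℝ)) = Lset A P V₀ V₁) →
      ¬∃ x, x ∈ Lset A P V₀ V₁ ∧ V₁ x ≠ 0) := by
  have hL0 := zero_mem_Lset hP0 hV₀0 hV₁0 hA0
  refine ⟨?_, ?_, ?_⟩
  · rintro hL ⟨x, hx, hne⟩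
    rw [hL, mem_singleton_iff] at hx
    exact hne (hx ▸ hV₁0)
  · intro hinj hno
    refine eq_singleton_iff_unique_mem.2 ⟨hL0, fun x hx => ?_⟩
    by_contra hx0
    exact hno ⟨x, hx, mt (hinj x) hx0⟩
  · rintro hpointed ⟨S, hS⟩ ⟨x, hx, hne⟩
    have hnegx : -x ∈ Lset A P V₀ V₁ := by
      rw [← hS] at hx ⊢
      exact S.neg_mem hx
    -- `-V₁ x = V₁ (-x) + (-V₁ (-x) - V₁ x)` lies in `𝒜^∞ + 𝒳₊ ⊆ 𝒜^∞`
    have hneg : -V₁ x ∈ asymCone A := by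
      convert add_mem_asymCone_of_cone hXp_cone hA0 hAmono hnegx.2.2 (hV₁sp x) using 1
      abel
    have hmem : V₁ x ∈ asymCone A ∩ -asymCone A := ⟨hx.2.2, Set.mem_neg.2 hneg⟩
    rw [hpointed, mem_singleton_iff] at hmem
    exact hne hmem

theorem stmt18
    {X : Type*} [AddCommGroup X] [Module ℝ X] [TopologicalSpace X]
    [IsTopologicalAddGroup X] [ContinuousSMul ℝ X]
    (Xp : Set X) (hXp_cone : ∀ c : ℝ, 0 ≤ c → ∀ z ∈ Xp, c • z ∈ Xp)
    (hXp_conv : Convex ℝ Xp)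
    {N : ℕ} (hN : 1 ≤ N)
    (P : Set (Fin N → ℝ)) (hP0 : (0 : Fin N → ℝ) ∈ P)
    (V₀ : (Fin N → ℝ) → ℝ) (hV₀0 : V₀ 0 = 0) (hV₀sp : ∀ x, -V₀ (-x) ≤ V₀ x)
    (V₁ : (Fin N → ℝ) → X) (hV₁0 : V₁ 0 = 0) (hV₁sp : ∀ x, -V₁ (-x) - V₁ x ∈ Xp)
    (A : Set X) (hA0 : (0 : X) ∈ A) (hAmono : ∀ a ∈ A, ∀ p ∈ Xp, a + p ∈ A) :
    (Lset A P V₀ V₁ = {0} → ¬∃ x, x ∈ Lset A P V₀ V₁ ∧ V₁ x ≠ 0) ∧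
    ((∀ x, V₁ x = 0 → x = 0) → (¬∃ x, x ∈ Lset A P V₀ V₁ ∧ V₁ x ≠ 0) →
      Lset A P V₀ V₁ = {0}) ∧
    (asymCone A ∩ (-(asymCone A)) = {0} →
      (∃ S : Submodule ℝ (Fin N → ℝ), (S : Set (Fin N → ℝ)) = Lset A P V₀ V₁) →
      ¬∃ x, x ∈ Lset A P V₀ V₁ ∧ V₁ x ≠ 0) :=
  stmt18_general Xp hXp_cone P hP0 V₀ hV₀0 V₁ hV₁0 hV₁sp A hA0 hAmono
end
end
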